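/- arXiv:2111.00409 — 13 statements merged into one kernel-verified Lean document; each statement's English description precedes it below -/
import Mathlib

section
/- Let k be an integrable Mercer kernel on ℕ with RKHS realization (H, ι, K), and assume that for every g ∈ H the sequence (ι g t)_{t∈ℕ} is absolutely summable. Then: (i) there exists φ₀ ∈ H such that the partial sums Σ_{t=0}^{n} K t converge to φ₀ in the norm of H and ι φ₀ t = Σ_{s∈ℕ} k(t,s) for every t ∈ ℕ; (ii) ⟪φ₀, g⟫ = Σ_{t∈ℕ} ι g t for every g ∈ H; (iii) ‖φ₀‖² = Σ_{(s,t)∈ℕ×ℕ} k(s,t). -/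
open scoped RealInnerProductSpace

/-- For an integrable Mercer kernel `k` on `ℕ` with RKHS realization
`(H, ι, K)` such that `ι g` is absolutely summable for every `g ∈ H`, there is `φ₀ ∈ H`
which is the limit of the partial sums `∑_{t=0}^n K t`, represents the steady-state gain
functional (`⟪φ₀, g⟫ = ∑' t, ι g t`), satisfies `ι φ₀ t = ∑' s, k t s`, and has
`‖φ₀‖² = ∑' (s,t), k s t`. -/
theorem steady_state_gain_representer_discrete
    {H : Type*} [NormedAddCommGroup H] [InnerProductSpace ℝ H] [CompleteSpace H]
    (k : ℕ → ℕ → ℝ)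
    (hknz : k ≠ 0)
    (hksymm : ∀ s t : ℕ, k s t = k t s)
    (hkpsd : ∀ (m : ℕ) (ts : Fin m → ℕ) (a : Fin m → ℝ),
      0 ≤ ∑ i : Fin m, ∑ j : Fin m, a i * k (ts i) (ts j) * a j)
    (hkint : Summable (fun p : ℕ × ℕ => |k p.1 p.2|))
    (ι : H →ₗ[ℝ] (ℕ → ℝ)) (hι : Function.Injective ι)
    (K : ℕ → H)
    (hK : ∀ t s : ℕ, ι (K t) s = k t s)
    (hrep : ∀ (g : H) (t : ℕ), ⟪g, K t⟫ = ι g t)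
    (hsum : ∀ g : H, Summable (fun t : ℕ => |ι g t|)) :
    ∃ φ₀ : H,
      Filter.Tendsto (fun n : ℕ => ∑ t ∈ Finset.range (n + 1), K t)
        Filter.atTop (nhds φ₀) ∧
      (∀ t : ℕ, ι φ₀ t = ∑' s : ℕ, k t s) ∧
      (∀ g : H, ⟪φ₀, g⟫ = ∑' t : ℕ, ι g t) ∧
      ‖φ₀‖ ^ 2 = ∑' p : ℕ × ℕ, k p.1 p.2 := by
  -- inner products of K
  have hKK : ∀ s t : ℕ, ⟪K s, K t⟫ = k s t := by
    intro s t; rw [hrep, hK]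
  -- norm of finite sums
  have hnormsq : ∀ F : Finset ℕ,
      ‖∑ t ∈ F, K t‖ ^ 2 = ∑ p ∈ F ×ˢ F, k p.1 p.2 := by
    intro F
    rw [← real_inner_self_eq_norm_sq, inner_sum, Finset.sum_product]
    simp_rw [sum_inner, hKK]
    exact Finset.sum_comm
  -- K is summable
  have hKsum : Summable K := by
    rw [summable_iff_vanishing]
    intro e he
    obtain ⟨ε, hε, hball⟩ := Metric.mem_nhds_iff.mp he
    obtain ⟨S, hS⟩ := (summable_iff_vanishing.mp hkint) (Metric.ball 0 (ε ^ 2))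
      (Metric.ball_mem_nhds _ (by positivity))
    refine ⟨S.image Prod.fst ∪ S.image Prod.snd, fun F hF => ?_⟩
    apply hball
    have hdisj : Disjoint (F ×ˢ F) S := by
      rw [Finset.disjoint_left]
      rintro ⟨a, b⟩ hab hS'
      rw [Finset.mem_product] at hab
      exact (Finset.disjoint_left.mp hF hab.1)
        (Finset.mem_union_left _ (Finset.mem_image_of_mem Prod.fst hS'))
    have h1 := hS _ hdisj
    simp only [Metric.mem_ball, Real.dist_eq, sub_zero, dist_zero_right] at h1 ⊢
    have h2 : ‖∑ t ∈ F, K t‖ ^ 2 < ε ^ 2 := by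
      rw [hnormsq]
      refine lt_of_le_of_lt ?_ (lt_of_le_of_lt (le_abs_self _) h1)
      exact Finset.sum_le_sum fun p _ => le_abs_self _
    exact lt_of_pow_lt_pow_left₀ 2 hε.le h2
  obtain ⟨φ₀, hφ⟩ := hKsum
  refine ⟨φ₀, ?_, ?_, ?_, ?_⟩
  · exact hφ.tendsto_sum_nat.comp (Filter.tendsto_add_atTop_nat 1)
  · intro t
    have h1 : HasSum (fun s => ⟪K t, K s⟫) ⟪K t, φ₀⟫ :=
      (innerSL ℝ (K t)).hasSum hφ
    have h2 : ι φ₀ t = ⟪K t, φ₀⟫ := by rw [real_inner_comm, hrep]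
    rw [h2, ← h1.tsum_eq]
    exact tsum_congr fun s => hKK t s
  · intro g
    have h1 : HasSum (fun t => ⟪g, K t⟫) ⟪g, φ₀⟫ :=
      (innerSL ℝ g).hasSum hφ
    rw [real_inner_comm, ← h1.tsum_eq]
    exact tsum_congr fun t => hrep g t
  · have hks : Summable (fun p : ℕ × ℕ => k p.1 p.2) := hkint.of_abs
    have h1 : HasSum (fun t => ⟪φ₀, K t⟫) ⟪φ₀, φ₀⟫ :=
      (innerSL ℝ φ₀).hasSum hφ
    have h2 : ∀ t, ⟪φ₀, K t⟫ = ∑' s, k t s := by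
      intro t
      have h3 : HasSum (fun s => ⟪K t, K s⟫) ⟪K t, φ₀⟫ :=
        (innerSL ℝ (K t)).hasSum hφ
      rw [real_inner_comm, ← h3.tsum_eq]
      exact tsum_congr fun s => hKK t s
    rw [← real_inner_self_eq_norm_sq, ← h1.tsum_eq,
      Summable.tsum_prod' hks hks.prod_factor]
    exact tsum_congr fun t => (h2 t)
end

section
/- Let k be an integrable Mercer kernel on ℝ≥0 with RKHS realization (H, ι, K), and assume that for every g ∈ H the function t ↦ ι g t is integrable on ℝ≥0. Then: (i) there exists φ₀ ∈ H such that ι φ₀ t = ∫_{ℝ≥0} k(t,s) ds for every t ∈ ℝ≥0; (ii) ⟪φ₀, g⟫ = ∫_{ℝ≥0} ι g t dt for every g ∈ H; (iii) ‖φ₀‖² = ∫_{ℝ≥0×ℝ≥0} k(s,t) ds dt. -/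
open MeasureTheory Filter Topology
open scoped RealInnerProductSpace

/-- For an integrable Mercer kernel `k` on `ℝ≥0` (modelled as `Set.Ici 0 ⊆ ℝ`)
with RKHS realization `(H, ι, K)` such that `ι g` is integrable on `ℝ≥0` for every `g ∈ H`,
there is `φ₀ ∈ H` with `ι φ₀ t = ∫_{ℝ≥0} k t s ds` for every `t ≥ 0`,
`⟪φ₀, g⟫ = ∫_{ℝ≥0} ι g t dt` for every `g ∈ H`, and `‖φ₀‖² = ∫_{ℝ≥0×ℝ≥0} k s t ds dt`. -/
theorem steady_state_gain_representer_continuous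
    {H : Type*} [NormedAddCommGroup H] [InnerProductSpace ℝ H] [CompleteSpace H]
    (k : ℝ → ℝ → ℝ)
    (hknz : ∃ s t : ℝ, 0 ≤ s ∧ 0 ≤ t ∧ k s t ≠ 0)
    (hkcont : ContinuousOn (fun p : ℝ × ℝ => k p.1 p.2) (Set.Ici 0 ×ˢ Set.Ici 0))
    (hksymm : ∀ s t : ℝ, 0 ≤ s → 0 ≤ t → k s t = k t s)
    (hkpsd : ∀ (m : ℕ) (ts : Fin m → ℝ) (a : Fin m → ℝ), (∀ i, 0 ≤ ts i) →
      0 ≤ ∑ i : Fin m, ∑ j : Fin m, a i * k (ts i) (ts j) * a j)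
    (hkint : IntegrableOn (fun p : ℝ × ℝ => |k p.1 p.2|) (Set.Ici 0 ×ˢ Set.Ici 0))
    (ι : H →ₗ[ℝ] (ℝ → ℝ))
    (hι : ∀ g g' : H, (∀ t : ℝ, 0 ≤ t → ι g t = ι g' t) → g = g')
    (K : ℝ → H)
    (hK : ∀ t s : ℝ, 0 ≤ t → 0 ≤ s → ι (K t) s = k t s)
    (hrep : ∀ (g : H) (t : ℝ), 0 ≤ t → ⟪g, K t⟫ = ι g t)
    (hint : ∀ g : H, IntegrableOn (fun t : ℝ => ι g t) (Set.Ici 0)) :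
    ∃ φ₀ : H,
      (∀ t : ℝ, 0 ≤ t → ι φ₀ t = ∫ s in Set.Ici (0 : ℝ), k t s) ∧
      (∀ g : H, ⟪φ₀, g⟫ = ∫ t in Set.Ici (0 : ℝ), ι g t) ∧
      ‖φ₀‖ ^ 2 = ∫ p in Set.Ici (0 : ℝ) ×ˢ Set.Ici (0 : ℝ), k p.1 p.2 := by
  -- inner products of kernel sections
  have hKK : ∀ s t : ℝ, 0 ≤ s → 0 ≤ t → ⟪K s, K t⟫ = k s t := fun s t hs ht => by
    rw [hrep _ _ ht, hK _ _ hs ht]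
  -- squared distance between kernel sections
  have hKnorm : ∀ s t : ℝ, 0 ≤ s → 0 ≤ t →
      ‖K s - K t‖ ^ 2 = k s s - k s t - k t s + k t t := by
    intro s t hs ht
    have : ‖K s - K t‖ ^ 2 = ⟪K s - K t, K s - K t⟫ := (real_inner_self_eq_norm_sq _).symm
    rw [this, inner_sub_left, inner_sub_right, inner_sub_right,
      hKK s s hs hs, hKK s t hs ht, hKK t s ht hs, hKK t t ht ht]
    ring
  -- K is continuous on Ici 0
  have hds : ContinuousOn (fun s : ℝ => k s s) (Set.Ici 0) :=
    hkcont.comp (continuous_id.prodMk continuous_id).continuousOn (fun s hs => ⟨hs, hs⟩)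
  have hKcont : ContinuousOn K (Set.Ici 0) := by
    intro t ht
    have h1 : ContinuousOn (fun s : ℝ => k s t) (Set.Ici 0) :=
      hkcont.comp (continuous_id.prodMk continuous_const).continuousOn (fun s hs => ⟨hs, ht⟩)
    have h2 : ContinuousOn (fun s : ℝ => k t s) (Set.Ici 0) :=
      hkcont.comp (continuous_const.prodMk continuous_id).continuousOn (fun s hs => ⟨ht, hs⟩)
    have hf : ContinuousWithinAt
        (fun s => Real.sqrt (k s s - k s t - k t s + k t t)) (Set.Ici 0) t :=
      Real.continuous_sqrt.continuousAt.comp_continuousWithinAt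
        ((((hds t ht).sub (h1 t ht)).sub (h2 t ht)).add continuousWithinAt_const)
    have hval : Real.sqrt (k t t - k t t - k t t + k t t) = 0 := by
      simp
    have hlim : Tendsto (fun s => Real.sqrt (k s s - k s t - k t s + k t t))
        (𝓝[Set.Ici 0] t) (𝓝 0) := by
      have := hf
      rw [ContinuousWithinAt, hval] at this
      exact this
    have hnorm : Tendsto (fun s => ‖K s - K t‖) (𝓝[Set.Ici 0] t) (𝓝 0) := by
      refine hlim.congr' ?_
      filter_upwards [self_mem_nhdsWithin] with s hs
      rw [← hKnorm s t hs ht, Real.sqrt_sq (norm_nonneg _)]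
    exact tendsto_iff_norm_sub_tendsto_zero.mpr hnorm
  -- truncated representers
  have hKint : ∀ n : ℕ, IntegrableOn K (Set.Icc (0 : ℝ) n) :=
    fun n => (hKcont.mono Set.Icc_subset_Ici_self).integrableOn_compact isCompact_Icc
  set φ : ℕ → H := fun n => ∫ t in Set.Icc (0 : ℝ) n, K t with hφ
  have hφinner : ∀ (n : ℕ) (g : H), ⟪g, φ n⟫ = ∫ t in Set.Icc (0 : ℝ) n, ι g t := by
    intro n g
    rw [hφ, ← integral_inner (hKint n) g]
    refine setIntegral_congr_fun measurableSet_Icc fun t htm => ?_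
    exact hrep g t htm.1
  -- the limit functional
  set f : H → ℝ := fun g => ∫ t in Set.Ici (0 : ℝ), ι g t with hfdef
  have hUnion : (⋃ n : ℕ, Set.Icc (0 : ℝ) n) = Set.Ici 0 := by
    ext x
    simp only [Set.mem_iUnion, Set.mem_Icc, Set.mem_Ici]
    constructor
    · rintro ⟨n, h, _⟩; exact h
    · intro hx
      obtain ⟨n, hn⟩ := exists_nat_ge x
      exact ⟨n, hx, hn⟩
  have hmono : Monotone fun n : ℕ => Set.Icc (0 : ℝ) n := fun m n hmn =>
    Set.Icc_subset_Icc le_rfl (by exact_mod_cast hmn)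
  have htend : ∀ g : H, Tendsto (fun n => ⟪g, φ n⟫) atTop (𝓝 (f g)) := by
    intro g
    have := tendsto_setIntegral_of_monotone (f := fun t => ι g t) (μ := volume)
      (fun n : ℕ => measurableSet_Icc) hmono (by rw [hUnion]; exact hint g)
    rw [hUnion] at this
    simpa only [hφinner] using this
  -- Banach–Steinhaus limit functional
  set L : ℕ → H →L[ℝ] ℝ := fun n => innerSL ℝ (φ n) with hLdef
  have hLtend : Tendsto (fun n g => L n g) atTop (𝓝 f) := by
    rw [tendsto_pi_nhds]
    intro g
    have := htend g
    simpa only [hLdef, innerSL_apply_apply, real_inner_comm] using this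
  let Linf : H →L[ℝ] ℝ := continuousLinearMapOfTendsto L hLtend
  have hLinf : ∀ g : H, Linf g = f g := fun g => rfl
  -- Riesz representer
  refine ⟨(InnerProductSpace.toDual ℝ H).symm Linf, ?_, ?_, ?_⟩
  case refine_2 =>
    intro g
    rw [InnerProductSpace.toDual_symm_apply, hLinf]
  all_goals
    have key : ∀ g : H, ⟪(InnerProductSpace.toDual ℝ H).symm Linf, g⟫
        = ∫ t in Set.Ici (0 : ℝ), ι g t := fun g => by
      rw [InnerProductSpace.toDual_symm_apply, hLinf]
  case refine_1 =>
    intro t ht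
    rw [← hrep _ t ht, key (K t)]
    exact setIntegral_congr_fun measurableSet_Ici fun s hs => hK t s ht hs
  case refine_3 =>
    set φ₀ := (InnerProductSpace.toDual ℝ H).symm Linf with hφ₀
    have h1 : ∀ t : ℝ, 0 ≤ t → ι φ₀ t = ∫ s in Set.Ici (0 : ℝ), k t s := by
      intro t ht
      rw [← hrep _ t ht, key (K t)]
      exact setIntegral_congr_fun measurableSet_Ici fun s hs => hK t s ht hs
    have hmeas : AEStronglyMeasurable (fun p : ℝ × ℝ => k p.1 p.2)
        ((volume.restrict (Set.Ici (0:ℝ) ×ˢ Set.Ici (0:ℝ)))) :=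
      hkcont.aestronglyMeasurable (measurableSet_Ici.prod measurableSet_Ici)
    have hkint' : IntegrableOn (fun p : ℝ × ℝ => k p.1 p.2)
        (Set.Ici (0:ℝ) ×ˢ Set.Ici (0:ℝ)) :=
      hkint.mono' hmeas (ae_of_all _ fun p => by simp [abs_abs])
    have hprod : (∫ p in Set.Ici (0 : ℝ) ×ˢ Set.Ici (0 : ℝ), k p.1 p.2)
        = ∫ t in Set.Ici (0 : ℝ), ∫ s in Set.Ici (0 : ℝ), k t s := by
      rw [Measure.volume_eq_prod]
      rw [Measure.volume_eq_prod] at hkint'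
      exact setIntegral_prod _ hkint'
    rw [hprod, ← real_inner_self_eq_norm_sq, key φ₀]
    exact setIntegral_congr_fun measurableSet_Ici fun t ht => h1 t ht
end

section
/- Let k be an integrable Mercer kernel on ℕ with RKHS realization (H, ι, K), assume that for every g ∈ H the sequence (ι g t)_{t∈ℕ} is absolutely summable, and assume there exists τ ∈ ℕ with Σ_{s∈ℕ} k(τ,s) ≠ 0. Let δ̲ ≤ δ̄ be real numbers and define the steady-state gain functional ℓ₀(g) := Σ_{t∈ℕ} ι g t for g ∈ H. Then the set G := { g ∈ H : ℓ₀(g) ∈ [δ̲, δ̄] } is a nonempty, closed, and convex subset of H. -/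
open scoped RealInnerProductSpace

/-- For an integrable Mercer kernel `k` on `ℕ` with RKHS realization
`(H, ι, K)`, with absolutely summable `ι g` for all `g`, and `∑' s, k τ s ≠ 0` for some
`τ`, the set `G = {g ∈ H : ℓ₀(g) ∈ [δ̲, δ̄]}` (where `ℓ₀ g = ∑' t, ι g t`) is nonempty,
closed and convex. -/
theorem steady_state_gain_constraint_set
    {H : Type*} [NormedAddCommGroup H] [InnerProductSpace ℝ H] [CompleteSpace H]
    (k : ℕ → ℕ → ℝ)
    (hknz : k ≠ 0)
    (hksymm : ∀ s t : ℕ, k s t = k t s)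
    (hkpsd : ∀ (m : ℕ) (ts : Fin m → ℕ) (a : Fin m → ℝ),
      0 ≤ ∑ i : Fin m, ∑ j : Fin m, a i * k (ts i) (ts j) * a j)
    (hkint : Summable (fun p : ℕ × ℕ => |k p.1 p.2|))
    (ι : H →ₗ[ℝ] (ℕ → ℝ)) (hι : Function.Injective ι)
    (K : ℕ → H)
    (hK : ∀ t s : ℕ, ι (K t) s = k t s)
    (hrep : ∀ (g : H) (t : ℕ), ⟪g, K t⟫ = ι g t)
    (hsum : ∀ g : H, Summable (fun t : ℕ => |ι g t|))
    (τ : ℕ) (hτ : (∑' s : ℕ, k τ s) ≠ 0)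
    (δlo δhi : ℝ) (hδ : δlo ≤ δhi)
    (G : Set H) (hG : G = {g : H | (∑' t : ℕ, ι g t) ∈ Set.Icc δlo δhi}) :
    G.Nonempty ∧ IsClosed G ∧ Convex ℝ G := by
  -- Step 1: K is summable in H
  have hKsum : Summable K := by
    rw [summable_iff_vanishing]
    intro e he
    rcases Metric.mem_nhds_iff.mp he with ⟨ε, hε, hball⟩
    obtain ⟨S, hS⟩ := (summable_iff_vanishing.mp hkint)
      (Metric.ball 0 (ε ^ 2)) (Metric.ball_mem_nhds 0 (by positivity))
    refine ⟨S.image Prod.fst ∪ S.image Prod.snd, fun t ht => ?_⟩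
    apply hball
    simp only [Metric.mem_ball, dist_zero_right, Real.norm_eq_abs]
    have hdisj : Disjoint (t ×ˢ t) S := by
      rw [Finset.disjoint_left]
      intro p hp hpS
      obtain ⟨h1, _⟩ := Finset.mem_product.mp hp
      exact (Finset.disjoint_left.mp ht) h1
        (Finset.mem_union_left _ (Finset.mem_image_of_mem _ hpS))
    have hsmall : ∑ p ∈ t ×ˢ t, |k p.1 p.2| < ε ^ 2 := by
      have := hS (t ×ˢ t) hdisj
      simp only [Metric.mem_ball, dist_zero_right, Real.norm_eq_abs] at this
      have hnn : (0 : ℝ) ≤ ∑ p ∈ t ×ˢ t, |k p.1 p.2| :=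
        Finset.sum_nonneg fun _ _ => abs_nonneg _
      rwa [abs_of_nonneg hnn] at this
    have hsq : ‖∑ i ∈ t, K i‖ ^ 2 = ∑ i ∈ t, ∑ j ∈ t, k i j := by
      rw [← real_inner_self_eq_norm_sq, sum_inner]
      refine Finset.sum_congr rfl fun i _ => ?_
      rw [inner_sum]
      refine Finset.sum_congr rfl fun j _ => ?_
      rw [hrep (K i) j, hK i j]
    have hle : ‖∑ i ∈ t, K i‖ ^ 2 < ε ^ 2 := by
      rw [hsq]
      calc ∑ i ∈ t, ∑ j ∈ t, k i j
          ≤ ∑ i ∈ t, ∑ j ∈ t, |k i j| := by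
            refine Finset.sum_le_sum fun i _ => Finset.sum_le_sum fun j _ => le_abs_self _
        _ = ∑ p ∈ t ×ˢ t, |k p.1 p.2| := by rw [Finset.sum_product]
        _ < ε ^ 2 := hsmall
    have : ‖∑ i ∈ t, K i‖ < ε := lt_of_pow_lt_pow_left₀ 2 hε.le hle
    simpa [dist_zero_right] using this
  -- the representer of ℓ₀
  set h0 : H := ∑' t, K t with hh0
  have hinner : ∀ g : H, (∑' t : ℕ, ι g t) = ⟪h0, g⟫ := by
    intro g
    have := (innerSL ℝ g).map_tsum hKsum
    simp only [innerSL_apply_apply] at this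
    rw [real_inner_comm, hh0, this]
    exact tsum_congr fun t => (hrep g t).symm
  -- rewrite G as a preimage
  have hGeq : G = (innerSL ℝ h0) ⁻¹' Set.Icc δlo δhi := by
    rw [hG]
    ext g
    simp [hinner g]
  constructor
  · -- Nonempty
    refine ⟨(δlo / (∑' s : ℕ, k τ s)) • K τ, ?_⟩
    rw [hG]
    have : (∑' t : ℕ, ι ((δlo / (∑' s : ℕ, k τ s)) • K τ) t) = δlo := by
      have heq : ∀ t : ℕ, ι ((δlo / (∑' s : ℕ, k τ s)) • K τ) t
          = (δlo / (∑' s : ℕ, k τ s)) * k τ t := by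
        intro t
        rw [map_smul]
        simp [hK τ t]
      rw [tsum_congr heq, tsum_mul_left, div_mul_cancel₀ _ hτ]
    simp only [Set.mem_setOf_eq, this]
    exact ⟨le_refl _, hδ⟩
  constructor
  · rw [hGeq]
    exact IsClosed.preimage (innerSL ℝ h0).continuous isClosed_Icc
  · rw [hGeq]
    exact (convex_Icc δlo δhi).linear_preimage ((innerSL ℝ h0) : H →ₗ[ℝ] ℝ)
end

section
/- (Representer theorem.) Let H be a real Hilbert space, m ∈ ℕ, w₁,…,w_m ∈ H, let e : (Fin m → ℝ) → ℝ ∪ {+∞} be any function (taking values in EReal, never −∞), and let r : ℝ → ℝ be monotone nondecreasing. Define F : H → ℝ ∪ {+∞} by F(w) := e(fun i => ⟪w_i, w⟫) + r(‖w‖). If there exists w* ∈ H with F(w*) ≤ F(w) for all w ∈ H, then there exists ŵ in the linear span of {w₁,…,w_m} with F(ŵ) ≤ F(w) for all w ∈ H. -/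
/-! Replace a minimiser by its orthogonal projection onto the (finite-dimensional, hence
complete) span of the `w i`: the inner products with the `w i` are unchanged and the norm does
not grow, so by monotonicity of `r` the objective does not increase. -/

open scoped RealInnerProductSpace

namespace Submodule

variable {H : Type*} [NormedAddCommGroup H] [InnerProductSpace ℝ H]
  (K : Submodule ℝ H) [K.HasOrthogonalProjection]

theorem inner_starProjection_of_mem_left {v : H} (hv : v ∈ K) (x : H) :
    ⟪v, K.starProjection x⟫ = ⟪v, x⟫ := by
  rw [← inner_starProjection_left_eq_right, K.starProjection_eq_self_iff.mpr hv]

theorem add_monotone_norm_starProjection_le {ι M : Type*} [AddCommMonoid M] [PartialOrder M]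
    [IsOrderedAddMonoid M] {w : ι → H} (hw : ∀ i, w i ∈ K) (e : (ι → ℝ) → M) {r : ℝ → M}
    (hr : Monotone r) (x : H) :
    e (fun i => ⟪w i, K.starProjection x⟫) + r ‖K.starProjection x‖ ≤
      e (fun i => ⟪w i, x⟫) + r ‖x‖ := by
  simp only [K.inner_starProjection_of_mem_left (hw _)]
  exact add_le_add_right (hr (K.norm_starProjection_apply_le x)) _

end Submodule

theorem representer_theorem_general
    {H : Type*} [NormedAddCommGroup H] [InnerProductSpace ℝ H]
    (m : ℕ) (w : Fin m → H)
    (e : (Fin m → ℝ) → EReal)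
    (r : ℝ → ℝ) (hr : Monotone r)
    (F : H → EReal)
    (hF : ∀ x : H, F x = e (fun i => ⟪w i, x⟫) + ((r ‖x‖ : ℝ) : EReal))
    (hmin : ∃ wstar : H, ∀ x : H, F wstar ≤ F x) :
    ∃ what ∈ Submodule.span ℝ (Set.range w), ∀ x : H, F what ≤ F x := by
  obtain ⟨wstar, hwstar⟩ := hmin
  set K := Submodule.span ℝ (Set.range w)
  have : FiniteDimensional ℝ K := FiniteDimensional.span_of_finite ℝ (Set.finite_range w)
  refine ⟨K.starProjection wstar, K.starProjection_apply_mem wstar, fun x => ?_⟩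
  calc F (K.starProjection wstar) ≤ F wstar := by
        rw [hF, hF]
        exact K.add_monotone_norm_starProjection_le
          (fun i => Submodule.subset_span ⟨i, rfl⟩) e (EReal.coe_strictMono.monotone.comp hr) wstar
    _ ≤ F x := hwstar x

/-- Representer theorem: Let `H` be a real Hilbert space, `w₁,…,w_m ∈ H`,
`e : (Fin m → ℝ) → EReal` never `−∞`, and `r : ℝ → ℝ` monotone nondecreasing. If
`F w = e (fun i => ⟪w i, w⟫) + r ‖w‖` attains its minimum over `H`, then it attains its
minimum at some point of the span of `{w₁,…,w_m}`. -/
theorem representer_theorem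
    {H : Type*} [NormedAddCommGroup H] [InnerProductSpace ℝ H] [CompleteSpace H]
    (m : ℕ) (w : Fin m → H)
    (e : (Fin m → ℝ) → EReal) (he : ∀ v : Fin m → ℝ, e v ≠ ⊥)
    (r : ℝ → ℝ) (hr : Monotone r)
    (F : H → EReal)
    (hF : ∀ x : H, F x = e (fun i => ⟪w i, x⟫) + ((r ‖x‖ : ℝ) : EReal))
    (hmin : ∃ wstar : H, ∀ x : H, F wstar ≤ F x) :
    ∃ what ∈ Submodule.span ℝ (Set.range w), ∀ x : H, F what ≤ F x :=
  representer_theorem_general m w e r hr F hF hmin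
end

section
/- Let H be a real Hilbert space, n ∈ ℕ, and φ₀, φ₁, …, φ_n ∈ H with φ₀ ≠ 0. Let ℓ : (Fin n → ℝ) → ℝ be convex, continuous, and nonnegative; let ρ : ℝ → ℝ be strictly increasing and strictly convex on [0,∞); let λ > 0 and let δ̲ ≤ δ̄ be real numbers. Define C := { g ∈ H : ⟪φ₀, g⟫ ∈ [δ̲, δ̄] } and J(g) := ℓ(fun i => ⟪φ_{i+1}, g⟫) + λ · ρ(‖g‖). Then there exists a unique g* ∈ C such that J(g*) ≤ J(g) for all g ∈ C, and moreover g* lies in the linear span of {φ₀, φ₁, …, φ_n}. -/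
open scoped RealInnerProductSpace

/-!
Orthogonal projection onto `V = span {φ₀, …, φₙ}` fixes every `⟪φᵢ, g⟫` and does not increase
`‖g‖`, so it maps `C` into itself without increasing `J`; it therefore suffices to minimize over
`C ∩ V`, where `J` is continuous and coercive on a finite-dimensional space. Uniqueness comes from
strict convexity of `J`: `g ↦ ρ ‖g‖` is strictly convex because `ρ` is strictly increasing and
strictly convex and a Hilbert space is strictly convex.
-/

open Set Filter Topology Bornology

theorem MonotoneOn.continuousWithinAt_Ici_of_convexOn {f : ℝ → ℝ} {a : ℝ}
    (hmono : MonotoneOn f (Ici a)) (hconv : ConvexOn ℝ (Ici a) f) :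
    ContinuousWithinAt f (Ici a) a := by
  have hupper : Tendsto (fun x => f a + (x - a) * (f (a + 1) - f a)) (𝓝[≥] a) (𝓝 (f a)) := by
    refine tendsto_nhdsWithin_of_tendsto_nhds (Continuous.tendsto' ?_ a _ (by simp))
    fun_prop
  refine tendsto_of_tendsto_of_tendsto_of_le_of_le' tendsto_const_nhds hupper ?_ ?_
  · filter_upwards [self_mem_nhdsWithin] with x hx using hmono self_mem_Ici hx hx
  · filter_upwards [self_mem_nhdsWithin, Ico_mem_nhdsGE (lt_add_one a)] with x hx hx1
    rcases (mem_Ici.1 hx).eq_or_lt with rfl | hax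
    · simp
    have hsecant := hconv.secant_mono_aux2 self_mem_Ici (by simp) hax hx1.2
    rw [add_sub_cancel_left, div_one, div_le_iff₀ (sub_pos.2 hax)] at hsecant
    linarith

theorem ConvexOn.continuous_comp_norm {E : Type*} [SeminormedAddCommGroup E] {ρ : ℝ → ℝ}
    (hmono : MonotoneOn ρ (Ici 0)) (hconv : ConvexOn ℝ (Ici 0) ρ) :
    Continuous fun x : E => ρ ‖x‖ :=
  (hconv.continuousOn_Ici (hmono.continuousWithinAt_Ici_of_convexOn hconv)).comp_continuous
    continuous_norm norm_nonneg

theorem ConvexOn.tendsto_atTop_of_lt {f : ℝ → ℝ} {a x y : ℝ} (hf : ConvexOn ℝ (Ici a) f)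
    (hx : a ≤ x) (hxy : x < y) (hfxy : f x < f y) : Tendsto f atTop atTop := by
  set m := (f y - f x) / (y - x)
  have hm : 0 < m := div_pos (sub_pos.2 hfxy) (sub_pos.2 hxy)
  have hline : Tendsto (fun z => f y + (z - y) * m) atTop atTop :=
    tendsto_atTop_add_const_left _ _
      ((tendsto_atTop_add_const_right _ _ tendsto_id).atTop_mul_const hm)
  refine tendsto_atTop_mono' _ ?_ hline
  filter_upwards [eventually_gt_atTop y] with z hz
  have hslope := hf.slope_mono_adjacent hx (hx.trans (hxy.trans hz).le) hxy hz
  rw [le_div_iff₀ (sub_pos.2 hz)] at hslope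
  linarith

theorem StrictConvexOn.const_mul {E : Type*} [AddCommMonoid E] [Module ℝ E] {s : Set E}
    {f : E → ℝ} {c : ℝ} (hf : StrictConvexOn ℝ s f) (hc : 0 < c) :
    StrictConvexOn ℝ s fun x => c * f x :=
  ⟨hf.1, fun x hx y hy hxy a b ha hb hab => by
    calc c * f (a • x + b • y) < c * (a • f x + b • f y) :=
          mul_lt_mul_of_pos_left (hf.2 hx hy hxy ha hb hab) hc
      _ = a • (c * f x) + b • (c * f y) := by simp only [smul_eq_mul]; ring⟩

theorem StrictConvexOn.comp_norm {E : Type*} [NormedAddCommGroup E] [NormedSpace ℝ E]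
    [StrictConvexSpace ℝ E] {ρ : ℝ → ℝ} (hmono : StrictMonoOn ρ (Ici 0))
    (hconv : StrictConvexOn ℝ (Ici 0) ρ) : StrictConvexOn ℝ univ fun x : E => ρ ‖x‖ := by
  refine ⟨convex_univ, fun x _ y _ hxy a b ha hb hab => ?_⟩
  have hnorm : ‖a • x + b • y‖ ≤ a * ‖x‖ + b * ‖y‖ := by
    simpa [norm_smul, abs_of_pos ha, abs_of_pos hb] using norm_add_le (a • x) (b • y)
  have hcomb_nonneg : 0 ≤ a * ‖x‖ + b * ‖y‖ := by positivity
  simp only [smul_eq_mul]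
  rcases eq_or_ne ‖x‖ ‖y‖ with hxy_norm | hxy_norm
  · -- equal norms: strict convexity of the space makes the norm of the combination drop
    have hlt : ‖a • x + b • y‖ < ‖x‖ :=
      norm_combo_lt_of_ne le_rfl hxy_norm.ge hxy ha hb hab
    have := hmono (norm_nonneg _) (norm_nonneg x) hlt
    rw [← hxy_norm, ← add_mul, hab, one_mul]
    exact this
  · calc ρ ‖a • x + b • y‖ ≤ ρ (a * ‖x‖ + b * ‖y‖) :=
          hmono.monotoneOn (norm_nonneg _) hcomb_nonneg hnorm
      _ < a * ρ ‖x‖ + b * ρ ‖y‖ := by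
          simpa using hconv.2 (norm_nonneg x) (norm_nonneg y) hxy_norm ha hb hab

section RegularizedObjective

variable {E F : Type*} [NormedAddCommGroup E] [NormedSpace ℝ E] [AddCommGroup F] [Module ℝ F]
  [TopologicalSpace F] (L : E →L[ℝ] F) {ℓ : F → ℝ} {ρ : ℝ → ℝ} {lam : ℝ}

theorem strictConvexOn_comp_add_mul_norm [StrictConvexSpace ℝ E] (hℓ : ConvexOn ℝ univ ℓ)
    (hρmono : StrictMonoOn ρ (Ici 0)) (hρ : StrictConvexOn ℝ (Ici 0) ρ) (hlam : 0 < lam) :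
    StrictConvexOn ℝ univ fun g => ℓ (L g) + lam * ρ ‖g‖ :=
  (hℓ.comp_linearMap L.toLinearMap).add_strictConvexOn ((hρ.comp_norm hρmono).const_mul hlam)

theorem continuous_comp_add_mul_norm (hℓ : Continuous ℓ) (hρmono : MonotoneOn ρ (Ici 0))
    (hρ : ConvexOn ℝ (Ici 0) ρ) : Continuous fun g => ℓ (L g) + lam * ρ ‖g‖ :=
  (hℓ.comp L.continuous).add (continuous_const.mul (hρ.continuous_comp_norm hρmono))

theorem tendsto_comp_add_mul_norm_cobounded (hℓ : ∀ v, 0 ≤ ℓ v) (hρ : Tendsto ρ atTop atTop)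
    (hlam : 0 < lam) : Tendsto (fun g => ℓ (L g) + lam * ρ ‖g‖) (cobounded E) atTop :=
  tendsto_atTop_mono (fun g => le_add_of_nonneg_left (hℓ (L g)))
    ((hρ.comp tendsto_norm_cobounded_atTop).const_mul_atTop hlam)

end RegularizedObjective

theorem Submodule.inner_starProjection_eq_of_mem_left {𝕜 E : Type*} [RCLike 𝕜]
    [NormedAddCommGroup E] [InnerProductSpace 𝕜 E] (K : Submodule 𝕜 E)
    [K.HasOrthogonalProjection] {u : E} (hu : u ∈ K) (v : E) :
    inner 𝕜 u (K.starProjection v) = inner 𝕜 u v := by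
  rw [← inner_starProjection_left_eq_right, starProjection_eq_self_iff.2 hu]

theorem Submodule.exists_isMinOn_mem_of_starProjection_le {𝕜 E : Type*} [RCLike 𝕜]
    [NormedAddCommGroup E] [InnerProductSpace 𝕜 E] (K : Submodule 𝕜 E) [FiniteDimensional 𝕜 K]
    {f : E → ℝ} {s : Set E} (hf : Continuous f) (hcoer : Tendsto f (cobounded E) atTop)
    (hs : IsClosed s) (hne : s.Nonempty) (hproj_mem : ∀ x ∈ s, K.starProjection x ∈ s)
    (hproj_le : ∀ x ∈ s, f (K.starProjection x) ≤ f x) :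
    ∃ x ∈ s, IsMinOn f s x ∧ x ∈ K := by
  obtain ⟨x₀, hx₀⟩ := hne
  have hcoer_K : Tendsto (fun y : K => f y) (cocompact K) atTop := by
    rw [← Metric.cobounded_eq_cocompact]
    exact hcoer.comp (tendsto_norm_atTop_iff_cobounded.1 (tendsto_norm_cobounded_atTop (E := K)))
  obtain ⟨y, hy, hymin⟩ := (hf.comp continuous_subtype_val).continuousOn.exists_isMinOn'
    (hs.preimage continuous_subtype_val) (x₀ := K.orthogonalProjectionOnto x₀) (hproj_mem x₀ hx₀)
    ((hcoer_K.eventually (eventually_ge_atTop _)).filter_mono inf_le_left)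
  refine ⟨y, hy, fun x hx => ?_, y.2⟩
  exact (isMinOn_iff.1 hymin (K.orthogonalProjectionOnto x) (hproj_mem x hx)).trans
    (hproj_le x hx)

theorem constrained_estimation_unique_solution_general
    {H : Type*} [NormedAddCommGroup H] [InnerProductSpace ℝ H]
    (n : ℕ) (φ : Fin (n + 1) → H) (hφ0 : φ 0 ≠ 0)
    (ℓ : (Fin n → ℝ) → ℝ)
    (hℓconv : ConvexOn ℝ Set.univ ℓ) (hℓcont : Continuous ℓ)
    (hℓnn : ∀ v : Fin n → ℝ, 0 ≤ ℓ v)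
    (ρ : ℝ → ℝ) (hρmono : StrictMono ρ) (hρconv : StrictConvexOn ℝ (Set.Ici 0) ρ)
    (lam : ℝ) (hlam : 0 < lam)
    (δlo δhi : ℝ) (hδ : δlo ≤ δhi)
    (C : Set H) (hC : C = {g : H | ⟪φ 0, g⟫ ∈ Set.Icc δlo δhi})
    (J : H → ℝ)
    (hJ : ∀ g : H, J g = ℓ (fun i : Fin n => ⟪φ i.succ, g⟫) + lam * ρ ‖g‖) :
    ∃ gs : H,
      (gs ∈ C ∧ (∀ g ∈ C, J gs ≤ J g) ∧ gs ∈ Submodule.span ℝ (Set.range φ)) ∧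
      (∀ g' : H, g' ∈ C → (∀ g ∈ C, J g' ≤ J g) → g' = gs) := by
  set V := Submodule.span ℝ (Set.range φ)
  have hφV (i : Fin (n + 1)) : φ i ∈ V := Submodule.subset_span ⟨i, rfl⟩
  have : FiniteDimensional ℝ V := FiniteDimensional.span_of_finite ℝ (finite_range φ)
  let L : H →L[ℝ] (Fin n → ℝ) := ContinuousLinearMap.pi fun i => innerSL ℝ (φ i.succ)
  obtain rfl : J = fun g => ℓ (L g) + lam * ρ ‖g‖ := funext hJ
  have hLproj (g : H) : L (V.starProjection g) = L g :=
    funext fun i => V.inner_starProjection_eq_of_mem_left (hφV i.succ) g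
  have hCne : C.Nonempty := ⟨(δlo / ‖φ 0‖ ^ 2) • φ 0, by
    rw [hC, mem_ofPred_eq, real_inner_smul_right, real_inner_self_eq_norm_sq,
      div_mul_cancel₀ _ (pow_pos (norm_pos_iff.2 hφ0) 2).ne']
    exact ⟨le_rfl, hδ⟩⟩
  have hCproj (g : H) (hg : g ∈ C) : V.starProjection g ∈ C := by
    rw [hC] at hg ⊢
    rwa [mem_ofPred_eq, V.inner_starProjection_eq_of_mem_left (hφV 0)]
  obtain ⟨gs, hgsC, hgsmin, hgsV⟩ := V.exists_isMinOn_mem_of_starProjection_le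
    (continuous_comp_add_mul_norm L hℓcont (hρmono.monotone.monotoneOn _) hρconv.convexOn)
    (tendsto_comp_add_mul_norm_cobounded L hℓnn
      (hρconv.convexOn.tendsto_atTop_of_lt le_rfl one_pos (hρmono one_pos)) hlam)
    (hC ▸ isClosed_Icc.preimage (innerSL ℝ (φ 0)).continuous) hCne hCproj
    (fun g _ => by
      simp only [hLproj]
      gcongr
      exact hρmono.monotone (V.norm_starProjection_apply_le g))
  have hCconv : Convex ℝ C := hC ▸ (convex_Icc δlo δhi).linear_preimage (innerₛₗ ℝ (φ 0))
  have hJconv := strictConvexOn_comp_add_mul_norm L hℓconv (hρmono.strictMonoOn _) hρconv hlam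
  exact ⟨gs, ⟨hgsC, hgsmin, hgsV⟩, fun g' hg'C hg'min =>
    (hJconv.subset (subset_univ C) hCconv).eq_of_isMinOn hg'min hgsmin hg'C hgsC⟩

/-- Existence, uniqueness and finite-dimensional representation of the
solution of the constrained regularized empirical-loss minimization problem: with
`C = {g : ⟪φ₀, g⟫ ∈ [δ̲, δ̄]}` and `J g = ℓ (fun i => ⟪φ_{i+1}, g⟫) + λ·ρ ‖g‖`, there is
a unique minimizer `g*` of `J` over `C`, and it lies in the span of `{φ₀, …, φ_n}`. -/
theorem constrained_estimation_unique_solution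
    {H : Type*} [NormedAddCommGroup H] [InnerProductSpace ℝ H] [CompleteSpace H]
    (n : ℕ) (φ : Fin (n + 1) → H) (hφ0 : φ 0 ≠ 0)
    (ℓ : (Fin n → ℝ) → ℝ)
    (hℓconv : ConvexOn ℝ Set.univ ℓ) (hℓcont : Continuous ℓ)
    (hℓnn : ∀ v : Fin n → ℝ, 0 ≤ ℓ v)
    (ρ : ℝ → ℝ) (hρmono : StrictMono ρ) (hρconv : StrictConvexOn ℝ (Set.Ici 0) ρ)
    (lam : ℝ) (hlam : 0 < lam)
    (δlo δhi : ℝ) (hδ : δlo ≤ δhi)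
    (C : Set H) (hC : C = {g : H | ⟪φ 0, g⟫ ∈ Set.Icc δlo δhi})
    (J : H → ℝ)
    (hJ : ∀ g : H, J g = ℓ (fun i : Fin n => ⟪φ i.succ, g⟫) + lam * ρ ‖g‖) :
    ∃ gs : H,
      (gs ∈ C ∧ (∀ g ∈ C, J gs ≤ J g) ∧ gs ∈ Submodule.span ℝ (Set.range φ)) ∧
      (∀ g' : H, g' ∈ C → (∀ g ∈ C, J g' ≤ J g) → g' = gs) :=
  constrained_estimation_unique_solution_general n φ hφ0 ℓ hℓconv hℓcont hℓnn ρ hρmono hρconv lam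
    hlam δlo δhi hδ C hC J hJ
end

section
/- Let k : ℝ≥0 → ℝ≥0 → ℝ be continuous with s ↦ k(t,s) integrable on ℝ≥0 for each t. Let n_s ∈ ℕ, let ξ₁,…,ξ_{n_s} ∈ ℝ, let 0 ≤ s₀ < s₁ < … < s_{n_s} be reals, and define u : ℝ → ℝ by u(t) := Σ_{i=0}^{n_s−1} ξ_{i+1} · 1_{[s_i, s_{i+1})}(t) for t ≥ 0 and u(t) := 0 for t < 0. For i = 0,…,n_s define s̄_i(τ) := max(τ − s_i, 0). Then for all t, τ ∈ ℝ≥0: ∫_{ℝ≥0} k(t,s) · u(τ − s) ds = Σ_{i=0}^{n_s−1} ξ_{i+1} · ∫_{s̄_{i+1}(τ)}^{s̄_i(τ)} k(t,s) ds. -/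
open MeasureTheory

lemma Ioc_inter_Ici_aux (a b : ℝ) :
    (Set.Ioc a b ∩ Set.Ici 0 : Set ℝ) =ᵐ[volume] (Set.Ioc (max a 0) (max b 0) : Set ℝ) := by
  have h1 : (Set.Ioc a b ∩ Set.Ici (0:ℝ) : Set ℝ) =ᵐ[volume] (Set.Ioc a b ∩ Set.Ioi 0 : Set ℝ) :=
    MeasureTheory.ae_eq_set_inter (Filter.EventuallyEq.refl _ _) MeasureTheory.Ioi_ae_eq_Ici.symm
  have h2 : Set.Ioc a b ∩ Set.Ioi 0 = Set.Ioc (max a 0) (max b 0) := by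
    ext x
    simp only [Set.mem_inter_iff, Set.mem_Ioc, Set.mem_Ioi, lt_max_iff, max_lt_iff, le_max_iff]
    constructor
    · rintro ⟨⟨h1, h2⟩, h3⟩
      exact ⟨⟨h1, h3⟩, Or.inl h2⟩
    · rintro ⟨⟨h1, h3⟩, h2⟩
      rcases h2 with h2 | h2
      · exact ⟨⟨h1, h2⟩, h3⟩
      · linarith
  rw [← h2]
  exact h1

/-- For a continuous kernel `k` on `ℝ≥0 × ℝ≥0` with `s ↦ k t s` integrable,
and a step input `u = ∑_{i<n_s} ξ_{i+1}·1_{[s_i, s_{i+1})}` (zero for negative time), the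
convolution functional satisfies
`∫_{ℝ≥0} k t s · u(τ − s) ds = ∑_{i<n_s} ξ_{i+1} · ∫_{s̄_{i+1}(τ)}^{s̄_i(τ)} k t s ds`,
where `s̄_i(τ) = max(τ − s_i, 0)`. -/
theorem convolution_with_step_input
    (k : ℝ → ℝ → ℝ)
    (hkcont : ContinuousOn (fun p : ℝ × ℝ => k p.1 p.2) (Set.Ici 0 ×ˢ Set.Ici 0))
    (hkint : ∀ t : ℝ, 0 ≤ t → IntegrableOn (fun s : ℝ => k t s) (Set.Ici 0))
    (ns : ℕ) (ξ : ℕ → ℝ) (s : ℕ → ℝ)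
    (hs0 : 0 ≤ s 0) (hsmono : ∀ i < ns, s i < s (i + 1))
    (u : ℝ → ℝ)
    (hu : ∀ t : ℝ, u t =
      if 0 ≤ t then
        ∑ i ∈ Finset.range ns,
          ξ (i + 1) * (Set.Ico (s i) (s (i + 1))).indicator (fun _ => (1 : ℝ)) t
      else 0) :
    ∀ t : ℝ, 0 ≤ t → ∀ τ : ℝ, 0 ≤ τ →
      ∫ x in Set.Ici (0 : ℝ), k t x * u (τ - x) =
        ∑ i ∈ Finset.range ns,
          ξ (i + 1) * ∫ x in (max (τ - s (i + 1)) 0)..(max (τ - s i) 0), k t x := by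
  intro t ht τ hτ
  -- nonnegativity of the s i
  have hsnn : ∀ i ≤ ns, 0 ≤ s i := by
    intro i hi
    induction i with
    | zero => exact hs0
    | succ n ih =>
      have hn : n < ns := Nat.lt_of_succ_le hi
      exact le_of_lt (lt_of_le_of_lt (ih (le_of_lt hn)) (hsmono n hn))
  -- pointwise rewriting of the integrand
  have hpt : ∀ x : ℝ, k t x * u (τ - x) =
      ∑ i ∈ Finset.range ns,
        ξ (i + 1) * (Set.Ioc (τ - s (i + 1)) (τ - s i)).indicator (k t) x := by
    intro x
    rw [hu]
    by_cases hx : 0 ≤ τ - x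
    · rw [if_pos hx, Finset.mul_sum]
      refine Finset.sum_congr rfl fun i hi => ?_
      have hmem : (τ - x ∈ Set.Ico (s i) (s (i + 1))) ↔
          (x ∈ Set.Ioc (τ - s (i + 1)) (τ - s i)) := by
        simp only [Set.mem_Ico, Set.mem_Ioc]
        constructor
        · rintro ⟨h1, h2⟩; constructor <;> linarith
        · rintro ⟨h1, h2⟩; constructor <;> linarith
      by_cases hm : τ - x ∈ Set.Ico (s i) (s (i + 1))
      · rw [Set.indicator_of_mem hm, Set.indicator_of_mem (hmem.mp hm)]
        ring
      · rw [Set.indicator_of_notMem hm, Set.indicator_of_notMem (fun h => hm (hmem.mpr h))]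
        ring
    · rw [if_neg hx, mul_zero]
      refine (Finset.sum_eq_zero fun i hi => ?_).symm
      have hi' : i < ns := Finset.mem_range.mp hi
      have : x ∉ Set.Ioc (τ - s (i + 1)) (τ - s i) := by
        simp only [Set.mem_Ioc, not_and_or, not_le]
        right
        have := hsnn i (le_of_lt hi')
        linarith
      rw [Set.indicator_of_notMem this, mul_zero]
  -- integrability of the summands
  have hint : ∀ i ∈ Finset.range ns,
      IntegrableOn (fun x => ξ (i + 1) * (Set.Ioc (τ - s (i + 1)) (τ - s i)).indicator (k t) x)
        (Set.Ici 0) volume := by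
    intro i _
    exact ((hkint t ht).indicator measurableSet_Ioc).const_mul _
  calc ∫ x in Set.Ici (0 : ℝ), k t x * u (τ - x)
      = ∫ x in Set.Ici (0 : ℝ), ∑ i ∈ Finset.range ns,
          ξ (i + 1) * (Set.Ioc (τ - s (i + 1)) (τ - s i)).indicator (k t) x := by
        exact integral_congr_ae (Filter.Eventually.of_forall fun x => hpt x)
    _ = ∑ i ∈ Finset.range ns, ∫ x in Set.Ici (0 : ℝ),
          ξ (i + 1) * (Set.Ioc (τ - s (i + 1)) (τ - s i)).indicator (k t) x :=
        integral_finset_sum _ hint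
    _ = ∑ i ∈ Finset.range ns,
          ξ (i + 1) * ∫ x in (max (τ - s (i + 1)) 0)..(max (τ - s i) 0), k t x := by
        refine Finset.sum_congr rfl fun i hi => ?_
        have hi' : i < ns := Finset.mem_range.mp hi
        rw [MeasureTheory.integral_const_mul]
        congr 1
        have hle : max (τ - s (i + 1)) 0 ≤ max (τ - s i) 0 :=
          max_le_max (by linarith [hsmono i hi']) le_rfl
        rw [intervalIntegral.integral_of_le hle,
          setIntegral_indicator measurableSet_Ioc, Set.inter_comm,
          setIntegral_congr_set (Ioc_inter_Ici_aux (τ - s (i + 1)) (τ - s i))]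
end

section
/- Let α ∈ (0,1) and γ ∈ (0, α^(−1/2)) with γ ≠ 1, let t ≥ 0 and 0 ≤ a ≤ b be real numbers, and set η := min(max(t, a), b). Then ∫_a^b α^(max(s,t)) · γ^(|s−t|) ds = ((γ^(−a) − γ^(−η)) / ln γ) · (αγ)^t + (((αγ)^b − (αγ)^η) / ln(αγ)) · γ^(−t). -/
open Real intervalIntegral

lemma cont_const_rpow {c : ℝ} (hc : 0 < c) : Continuous fun x : ℝ => c ^ x := by
  have : (fun x : ℝ => c ^ x) = fun x => Real.exp (Real.log c * x) := by
    funext x; rw [Real.rpow_def_of_pos hc]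
  rw [this]; exact Real.continuous_exp.comp (continuous_const.mul continuous_id)

lemma integral_const_rpow {c : ℝ} (hc : 0 < c) (hlc : Real.log c ≠ 0) (p q : ℝ) :
    ∫ x in p..q, c ^ x = (c ^ q - c ^ p) / Real.log c := by
  have key : ∀ x : ℝ, HasDerivAt (fun y => c ^ y / Real.log c) (c ^ x) x := by
    intro x
    have := (Real.hasStrictDerivAt_const_rpow hc x).hasDerivAt.div_const (Real.log c)
    simpa [mul_div_assoc, div_self hlc] using this
  rw [intervalIntegral.integral_eq_sub_of_hasDerivAt (fun x _ => key x)
    ((cont_const_rpow hc).intervalIntegrable p q)]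
  ring

/-- For the DC kernel, with `η = min(max(t,a), b)`,
`∫_a^b α^(max(s,t))·γ^|s−t| ds
  = ((γ^(−a) − γ^(−η))/ln γ)·(αγ)^t + (((αγ)^b − (αγ)^η)/ln(αγ))·γ^(−t)`. -/
theorem psi_DC
    (α : ℝ) (hα : α ∈ Set.Ioo (0 : ℝ) 1)
    (γ : ℝ) (hγ : γ ∈ Set.Ioo (0 : ℝ) (α ^ (-1/2 : ℝ))) (hγ1 : γ ≠ 1)
    (t a b : ℝ) (ht : 0 ≤ t) (ha : 0 ≤ a) (hab : a ≤ b) :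
    ∫ s in a..b, α ^ max s t * γ ^ |s - t| =
      ((γ ^ (-a) - γ ^ (-(min (max t a) b))) / Real.log γ) * (α * γ) ^ t +
        (((α * γ) ^ b - (α * γ) ^ min (max t a) b) / Real.log (α * γ)) * γ ^ (-t) := by
  obtain ⟨hα0, hα1⟩ := hα
  obtain ⟨hγ0, hγu⟩ := hγ
  set η := min (max t a) b with hη
  have hαγ0 : 0 < α * γ := mul_pos hα0 hγ0
  -- αγ < 1
  have hαγ1 : α * γ < 1 := by
    have h1 : α * γ < α * α ^ (-1/2 : ℝ) := by
      exact mul_lt_mul_of_pos_left hγu hα0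
    have h2 : α * α ^ (-1/2 : ℝ) = α ^ (1/2 : ℝ) := by
      nth_rewrite 1 [← Real.rpow_one α]
      rw [← Real.rpow_add hα0]
      norm_num
    have h3 : α ^ (1/2 : ℝ) < 1 := Real.rpow_lt_one hα0.le hα1 (by norm_num)
    calc α * γ < α * α ^ (-1/2 : ℝ) := h1
      _ = α ^ (1/2:ℝ) := h2
      _ < 1 := h3
  have hlγ : Real.log γ ≠ 0 := Real.log_ne_zero_of_pos_of_ne_one hγ0 hγ1
  have hlαγ : Real.log (α * γ) ≠ 0 :=
    ne_of_lt (Real.log_neg hαγ0 hαγ1)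
  have haη : a ≤ η := le_min (le_max_right t a) hab
  have hηb : η ≤ b := min_le_right _ _
  -- continuity of integrand
  have hcont : Continuous fun s => α ^ max s t * γ ^ |s - t| := by
    have h1 : Continuous fun s : ℝ => α ^ max s t :=
      (cont_const_rpow hα0).comp (continuous_id.max continuous_const)
    have h2 : Continuous fun s : ℝ => γ ^ |s - t| :=
      (cont_const_rpow hγ0).comp ((continuous_id.sub continuous_const).abs)
    exact h1.mul h2
  have hint : ∀ p q : ℝ, IntervalIntegrable (fun s => α ^ max s t * γ ^ |s - t|)
      MeasureTheory.volume p q := fun p q => hcont.intervalIntegrable p q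
  rw [← intervalIntegral.integral_add_adjacent_intervals (hint a η) (hint η b)]
  -- first piece
  have piece1 : ∫ s in a..η, α ^ max s t * γ ^ |s - t| =
      ((γ ^ (-a) - γ ^ (-η)) / Real.log γ) * (α * γ) ^ t := by
    rcases le_or_gt a t with hat | hat
    · have hηt : η ≤ t := min_le_of_left_le (by simp [max_eq_left, hat] )
      have hcg : ∫ s in a..η, α ^ max s t * γ ^ |s - t| =
          ∫ s in a..η, (α * γ) ^ t * (γ⁻¹) ^ s := by
        apply intervalIntegral.integral_congr
        intro s hs
        rw [Set.uIcc_of_le haη] at hs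
        have hst : s ≤ t := le_trans hs.2 hηt
        show α ^ max s t * γ ^ |s - t| = (α * γ) ^ t * (γ⁻¹) ^ s
        rw [max_eq_right hst, abs_of_nonpos (by linarith)]
        rw [Real.mul_rpow hα0.le hγ0.le, neg_sub,
          Real.rpow_sub hγ0, Real.inv_rpow hγ0.le, div_eq_mul_inv]
        ring
      rw [hcg, intervalIntegral.integral_const_mul,
        integral_const_rpow (inv_pos.mpr hγ0) (by rwa [Real.log_inv, neg_ne_zero]) a η]
      rw [Real.log_inv, Real.inv_rpow hγ0.le, Real.inv_rpow hγ0.le,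
        ← Real.rpow_neg hγ0.le, ← Real.rpow_neg hγ0.le]
      rw [div_neg]
      ring
    · have hη' : η = a := by
        rw [hη, max_eq_right hat.le, min_eq_left hab]
      rw [hη']
      simp
  -- second piece
  have piece2 : ∫ s in η..b, α ^ max s t * γ ^ |s - t| =
      (((α * γ) ^ b - (α * γ) ^ η) / Real.log (α * γ)) * γ ^ (-t) := by
    rcases le_or_gt t b with htb | htb
    · have htη : t ≤ η := le_min (le_max_left t a) htb
      have hcg : ∫ s in η..b, α ^ max s t * γ ^ |s - t| =
          ∫ s in η..b, γ ^ (-t) * (α * γ) ^ s := by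
        apply intervalIntegral.integral_congr
        intro s hs
        rw [Set.uIcc_of_le hηb] at hs
        have hst : t ≤ s := le_trans htη hs.1
        show α ^ max s t * γ ^ |s - t| = γ ^ (-t) * (α * γ) ^ s
        rw [max_eq_left hst, abs_of_nonneg (by linarith)]
        rw [Real.mul_rpow hα0.le hγ0.le, Real.rpow_sub hγ0,
          Real.rpow_neg hγ0.le, div_eq_mul_inv]
        ring
      rw [hcg, intervalIntegral.integral_const_mul,
        integral_const_rpow hαγ0 hlαγ η b]
      ring
    · have hη' : η = b := by
        rw [hη, min_eq_right (le_trans htb.le (le_max_left t a))]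
      rw [hη']
      simp
  rw [piece1, piece2]
end

section
/- Let α ∈ (0,1), let t ≥ 0 and 0 ≤ a ≤ b be real numbers, and set η := min(max(t, a), b). Then ∫_a^b (α^(max(s,t)+s+t) − (1/3)·α^(3·max(s,t))) ds = ((α^η − α^a) / ln α) · α^(2t) + ((α^(2b) − α^(2η)) / (2 ln α)) · α^t − (1/3)·(η − a)·α^(3t) − (α^(3b) − α^(3η)) / (9 ln α). -/
/-! Split `[a, b]` at `η`: on `[a, η]` we have `s ≤ t`, so the kernel is `α^(s + 2t) − α^(3t)/3`,
and on `[η, b]` we have `t ≤ s`, so it is `α^(2s + t) − α^(3s)/3`. Each piece is a combination of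
exponentials `α^(c s + d)`, whose primitive is `α^(c s + d) / (c log α)`. -/

open Real Set intervalIntegral

noncomputable def ssKernel (α s t : ℝ) : ℝ :=
  α ^ (max s t + s + t) - (1/3) * α ^ (3 * max s t)

variable {α : ℝ}

theorem continuous_const_rpow_mul_add (hα : 0 < α) (c d : ℝ) :
    Continuous fun s => α ^ (c * s + d) := by
  have := continuous_const_rpow hα.ne'
  fun_prop

theorem integral_rpow_mul_add (hα : 0 < α) (hα1 : α ≠ 1) {c : ℝ} (hc : c ≠ 0) (d u v : ℝ) :
    ∫ s in u..v, α ^ (c * s + d) = (α ^ (c * v + d) - α ^ (c * u + d)) / (c * log α) := by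
  have hL : log α ≠ 0 := log_ne_zero_of_pos_of_ne_one hα hα1
  have hderiv : ∀ s, HasDerivAt (fun x => α ^ (c * x + d) / (c * log α)) (α ^ (c * s + d)) s := by
    intro s
    have h := ((hasStrictDerivAt_const_rpow hα (c * s + d)).hasDerivAt.comp s
      (((hasDerivAt_id s).const_mul c).add_const d)).div_const (c * log α)
    exact h.congr_deriv (by field_simp)
  rw [integral_eq_sub_of_hasDerivAt (fun s _ => hderiv s)
    ((continuous_const_rpow_mul_add hα c d).intervalIntegrable u v)]
  ring

theorem continuous_ssKernel (hα : 0 < α) (t : ℝ) : Continuous fun s => ssKernel α s t := by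
  have := continuous_const_rpow hα.ne'
  unfold ssKernel
  fun_prop

theorem integral_ssKernel_of_le (hα : 0 < α) (hα1 : α ≠ 1) {t u v : ℝ}
    (h : ∀ s ∈ uIoo u v, s ≤ t) :
    ∫ s in u..v, ssKernel α s t =
      ((α ^ v - α ^ u) / log α) * α ^ (2 * t) - (1/3) * (v - u) * α ^ (3 * t) := by
  have hkernel : EqOn (fun s => ssKernel α s t)
      (fun s => α ^ (1 * s + 2 * t) - (1/3) * α ^ (3 * t)) (uIoo u v) := by
    intro s hs
    simp only [ssKernel, max_eq_right (h s hs)]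
    ring_nf
  rw [integral_congr_uIoo hkernel,
    integral_sub ((continuous_const_rpow_mul_add hα 1 (2 * t)).intervalIntegrable u v)
      intervalIntegrable_const,
    integral_const, integral_rpow_mul_add hα hα1 one_ne_zero, one_mul, one_mul,
    rpow_add hα, rpow_add hα, smul_eq_mul]
  ring

theorem integral_ssKernel_of_ge (hα : 0 < α) (hα1 : α ≠ 1) {t u v : ℝ}
    (h : ∀ s ∈ uIoo u v, t ≤ s) :
    ∫ s in u..v, ssKernel α s t =
      ((α ^ (2 * v) - α ^ (2 * u)) / (2 * log α)) * α ^ t -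
        (α ^ (3 * v) - α ^ (3 * u)) / (9 * log α) := by
  have hkernel : EqOn (fun s => ssKernel α s t)
      (fun s => α ^ (2 * s + t) - (1/3) * α ^ (3 * s + 0)) (uIoo u v) := by
    intro s hs
    simp only [ssKernel, max_eq_left (h s hs)]
    ring_nf
  have hL : log α ≠ 0 := log_ne_zero_of_pos_of_ne_one hα hα1
  rw [integral_congr_uIoo hkernel,
    integral_sub ((continuous_const_rpow_mul_add hα 2 t).intervalIntegrable u v)
      (((continuous_const_rpow_mul_add hα 3 0).const_mul _).intervalIntegrable u v),
    integral_const_mul, integral_rpow_mul_add hα hα1 two_ne_zero,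
    integral_rpow_mul_add hα hα1 three_ne_zero, add_zero, add_zero, rpow_add hα, rpow_add hα]
  field_simp
  ring

theorem psi_SS_general
    (α : ℝ) (hα : α ∈ Set.Ioo (0 : ℝ) 1)
    (t a b : ℝ) (hab : a ≤ b) :
    ∫ s in a..b, (α ^ (max s t + s + t) - (1/3) * α ^ (3 * max s t)) =
      ((α ^ min (max t a) b - α ^ a) / Real.log α) * α ^ (2 * t) +
        ((α ^ (2 * b) - α ^ (2 * min (max t a) b)) / (2 * Real.log α)) * α ^ t -
        (1/3) * (min (max t a) b - a) * α ^ (3 * t) -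
        (α ^ (3 * b) - α ^ (3 * min (max t a) b)) / (9 * Real.log α) := by
  obtain ⟨hα0, hα1⟩ := hα
  set η := min (max t a) b
  have haη : a ≤ η := le_min (le_max_right t a) hab
  have hηb : η ≤ b := min_le_right _ _
  have hleft : ∀ s ∈ uIoo a η, s ≤ t := by
    intro s hs
    rw [uIoo_of_le haη] at hs
    have : s < max t a := hs.2.trans_le (min_le_left _ _)
    exact (le_max_iff.mp this.le).resolve_right (not_le.mpr hs.1)
  have hright : ∀ s ∈ uIoo η b, t ≤ s := by
    intro s hs
    rw [uIoo_of_le hηb] at hs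
    exact (le_max_left t a).trans ((min_lt_iff.mp hs.1).resolve_right (not_lt.mpr hs.2.le)).le
  have hint (u v : ℝ) : IntervalIntegrable (fun s => ssKernel α s t) MeasureTheory.volume u v :=
    (continuous_ssKernel hα0 t).intervalIntegrable u v
  change ∫ s in a..b, ssKernel α s t = _
  rw [← integral_add_adjacent_intervals (hint a η) (hint η b),
    integral_ssKernel_of_le hα0 hα1.ne hleft, integral_ssKernel_of_ge hα0 hα1.ne hright]
  ring

/-- For the stable-spline kernel, with `η = min(max(t,a), b)`,
`∫_a^b (α^(max(s,t)+s+t) − (1/3)α^(3 max(s,t))) ds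
  = ((α^η − α^a)/ln α)·α^(2t) + ((α^(2b) − α^(2η))/(2 ln α))·α^t
    − (1/3)(η − a)·α^(3t) − (α^(3b) − α^(3η))/(9 ln α)`. -/
theorem psi_SS
    (α : ℝ) (hα : α ∈ Set.Ioo (0 : ℝ) 1)
    (t a b : ℝ) (ht : 0 ≤ t) (ha : 0 ≤ a) (hab : a ≤ b) :
    ∫ s in a..b, (α ^ (max s t + s + t) - (1/3) * α ^ (3 * max s t)) =
      ((α ^ min (max t a) b - α ^ a) / Real.log α) * α ^ (2 * t) +
        ((α ^ (2 * b) - α ^ (2 * min (max t a) b)) / (2 * Real.log α)) * α ^ t -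
        (1/3) * (min (max t a) b - a) * α ^ (3 * t) -
        (α ^ (3 * b) - α ^ (3 * min (max t a) b)) / (9 * Real.log α) :=
  psi_SS_general α hα t a b hab
end

section
/- Let α ∈ (0,1) and let t ≥ 0 be real. Then: (i) ∫_{ℝ≥0} α^(max(s,t)) ds = (t − 1/ln α) · α^t; (ii) for every γ ∈ (0, α^(−1/2)) with γ ≠ 1, ∫_{ℝ≥0} α^(max(s,t)) · γ^(|s−t|) ds = −((1 − γ^t)/ln γ + 1/ln(αγ)) · α^t; (iii) ∫_{ℝ≥0} (α^(max(s,t)+s+t) − (1/3)·α^(3·max(s,t))) ds = ((11/(18 ln α))·α^t − 1/ln α − t·α^t/3) · α^(2t). -/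
/-!
Each integrand changes form at `s = t`, where `max s t` does: on `[0, t]` it is `α^t`,
`α^t γ^(t-s)` or `α^(2t+s) - α^(3t)/3`, and on `(t, ∞)` a combination of exponentials `c^s` with
`0 < c < 1` (`c = α, αγ, α², α³`). Splitting the integral at `t` reduces everything to
`∫ c^s ds = c^s / log c`.
-/

open MeasureTheory Set Real

section RpowConstBase

variable {c : ℝ}

theorem integrableOn_Ioi_rpow_const_base (hc0 : 0 < c) (hc1 : c < 1) (a : ℝ) :
    IntegrableOn (fun s : ℝ => c ^ s) (Ioi a) := by
  simpa only [rpow_def_of_pos hc0] using integrableOn_exp_mul_Ioi (log_neg hc0 hc1) a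

theorem integral_Ioi_rpow_const_base (hc0 : 0 < c) (hc1 : c < 1) (a : ℝ) :
    ∫ s in Ioi a, c ^ s = -c ^ a / log c := by
  simpa only [rpow_def_of_pos hc0] using integral_exp_mul_Ioi (log_neg hc0 hc1) a

theorem intervalIntegral.integral_rpow_const_base (hc0 : 0 < c) (hc1 : c ≠ 1) (a b : ℝ) :
    ∫ s in a..b, c ^ s = (c ^ b - c ^ a) / log c := by
  have hlog : log c ≠ 0 := log_ne_zero_of_pos_of_ne_one hc0 hc1
  simp only [rpow_def_of_pos hc0]
  rw [intervalIntegral.integral_comp_mul_left (fun x => exp x) hlog, integral_exp, smul_eq_mul,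
    inv_mul_eq_div]

end RpowConstBase

theorem integral_Ici_eq_add_of_eqOn {f g h : ℝ → ℝ} {a b : ℝ} (hab : a ≤ b)
    (hfg : EqOn f g (Icc a b)) (hfh : EqOn f h (Ioi b))
    (hg : IntervalIntegrable g volume a b) (hh : IntegrableOn h (Ioi b)) :
    ∫ s in Ici a, f s = (∫ s in a..b, g s) + ∫ s in Ioi b, h s := by
  rw [← uIcc_of_le hab] at hfg
  rw [integral_Ici_eq_integral_Ioi, ← intervalIntegral.integral_interval_add_Ioi'
      (hg.congr (hfg.symm.mono uIoc_subset_uIcc)) (hh.congr_fun hfh.symm measurableSet_Ioi),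
    intervalIntegral.integral_congr hfg, setIntegral_congr_fun measurableSet_Ioi hfh]

variable {α γ t : ℝ}

theorem integral_Ici_rpow_max (hα0 : 0 < α) (hα1 : α < 1) (ht : 0 ≤ t) :
    ∫ s in Ici 0, α ^ max s t = (t - 1 / log α) * α ^ t := by
  rw [integral_Ici_eq_add_of_eqOn ht (g := fun _ => α ^ t) (h := fun s => α ^ s)
      (fun s hs => by simp only [max_eq_right hs.2])
      (fun s (hs : t < s) => by simp only [max_eq_left hs.le])
      intervalIntegrable_const (integrableOn_Ioi_rpow_const_base hα0 hα1 t),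
    intervalIntegral.integral_const, integral_Ioi_rpow_const_base hα0 hα1, smul_eq_mul, sub_zero]
  ring

theorem integral_Ici_rpow_max_mul_rpow_abs_sub (hα : 0 < α) (hγ0 : 0 < γ) (hγ1 : γ ≠ 1)
    (hαγ : α * γ < 1) (ht : 0 ≤ t) :
    ∫ s in Ici 0, α ^ max s t * γ ^ |s - t| =
      -((1 - γ ^ t) / log γ + 1 / log (α * γ)) * α ^ t := by
  have hαγ0 : 0 < α * γ := mul_pos hα hγ0
  rw [integral_Ici_eq_add_of_eqOn ht (g := fun s => α ^ t * γ ^ (t - s))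
      (h := fun s => (α * γ) ^ s / γ ^ t)
      (fun s hs => by simp only [max_eq_right hs.2, abs_of_nonpos (sub_nonpos.2 hs.2), neg_sub])
      (fun s (hs : t < s) => by
        simp only [max_eq_left hs.le, abs_of_pos (sub_pos.2 hs), rpow_sub hγ0,
          mul_rpow hα.le hγ0.le]
        ring)
      ((continuous_const.mul (continuous_const.rpow (continuous_const.sub continuous_id)
        fun _ => Or.inl hγ0.ne')).intervalIntegrable 0 t)
      ((integrableOn_Ioi_rpow_const_base hαγ0 hαγ t).div_const _),
    intervalIntegral.integral_const_mul, intervalIntegral.integral_comp_sub_left (fun x => γ ^ x),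
    integral_div, integral_Ioi_rpow_const_base hαγ0 hαγ,
    intervalIntegral.integral_rpow_const_base hγ0 hγ1, sub_self, sub_zero, rpow_zero,
    mul_rpow hα.le hγ0.le]
  have hlogγ : log γ ≠ 0 := log_ne_zero_of_pos_of_ne_one hγ0 hγ1
  have hlogαγ : log (α * γ) ≠ 0 := (log_neg hαγ0 hαγ).ne
  have hγt : γ ^ t ≠ 0 := (rpow_pos_of_pos hγ0 t).ne'
  field_simp
  ring

theorem integral_Ici_rpow_max_add_add_sub_rpow_three_mul_max (hα0 : 0 < α) (hα1 : α < 1)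
    (ht : 0 ≤ t) :
    ∫ s in Ici 0, (α ^ (max s t + s + t) - (1 / 3) * α ^ (3 * max s t)) =
      ((11 / (18 * log α)) * α ^ t - 1 / log α - t * α ^ t / 3) * α ^ (2 * t) := by
  have h3t : α ^ (3 * t) = α ^ t * α ^ (2 * t) := by rw [← rpow_add hα0]; ring_nf
  have hα2 : α ^ 2 < 1 := pow_lt_one₀ hα0.le hα1 two_ne_zero
  have hα3 : α ^ 3 < 1 := pow_lt_one₀ hα0.le hα1 three_ne_zero
  have hint2 := integrableOn_Ioi_rpow_const_base (by positivity) hα2 t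
  have hint3 := integrableOn_Ioi_rpow_const_base (by positivity) hα3 t
  have hright : IntegrableOn (fun s => α ^ t * (α ^ 2) ^ s - 1 / 3 * (α ^ 3) ^ s) (Ioi t) :=
    (hint2.const_mul _).sub (hint3.const_mul _)
  have hleft : IntervalIntegrable (fun s => α ^ (2 * t) * α ^ s) volume 0 t :=
    (continuous_const.mul (continuous_const.rpow continuous_id fun _ => Or.inl hα0.ne'))
      |>.intervalIntegrable 0 t
  have hleft_eq : ∫ s in (0 : ℝ)..t, (α ^ (2 * t) * α ^ s - 1 / 3 * α ^ (3 * t)) =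
      α ^ (2 * t) * ((α ^ t - 1) / log α) - t * α ^ (3 * t) / 3 := by
    rw [intervalIntegral.integral_sub hleft intervalIntegrable_const,
      intervalIntegral.integral_const_mul, intervalIntegral.integral_rpow_const_base hα0 hα1.ne,
      intervalIntegral.integral_const, rpow_zero, smul_eq_mul, sub_zero]
    ring
  have hright_eq : ∫ s in Ioi t, (α ^ t * (α ^ 2) ^ s - 1 / 3 * (α ^ 3) ^ s) =
      -α ^ (3 * t) / (2 * log α) + α ^ (3 * t) / (9 * log α) := by
    rw [integral_sub (hint2.const_mul _) (hint3.const_mul _), integral_const_mul, integral_const_mul,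
      integral_Ioi_rpow_const_base (by positivity) hα2,
      integral_Ioi_rpow_const_base (by positivity) hα3, log_pow, log_pow]
    simp only [← rpow_natCast_mul hα0.le, Nat.cast_ofNat, h3t]
    ring
  rw [integral_Ici_eq_add_of_eqOn ht (g := fun s => α ^ (2 * t) * α ^ s - 1 / 3 * α ^ (3 * t))
      (h := fun s => α ^ t * (α ^ 2) ^ s - 1 / 3 * (α ^ 3) ^ s)
      (fun s hs => by
        simp only [max_eq_right hs.2, ← rpow_add hα0]
        ring_nf)
      (fun s (hs : t < s) => by
        simp only [max_eq_left hs.le, ← rpow_natCast_mul hα0.le, ← rpow_add hα0]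
        push_cast
        ring_nf)
      (hleft.sub intervalIntegrable_const) hright, hleft_eq, hright_eq, h3t]
  have hlog : log α ≠ 0 := (log_neg hα0 hα1).ne
  field_simp
  ring

theorem mul_lt_one_of_lt_rpow_neg_half (hα0 : 0 < α) (hα1 : α < 1) (hγ : γ < α ^ (-1 / 2 : ℝ)) :
    α * γ < 1 :=
  calc α * γ < α * α ^ (-1 / 2 : ℝ) := mul_lt_mul_of_pos_left hγ hα0
    _ = α ^ (1 / 2 : ℝ) := by
      rw [← rpow_one_add' hα0.le (by norm_num)]; norm_num
    _ < 1 := rpow_lt_one hα0.le hα1 (by norm_num)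

/-- Steady-state gain representers `φ₀(t)` for the continuous-time TC, DC
and SS kernels:
(i) `∫_{ℝ≥0} α^(max(s,t)) ds = (t − 1/ln α)·α^t`;
(ii) `∫_{ℝ≥0} α^(max(s,t))·γ^|s−t| ds = −((1 − γ^t)/ln γ + 1/ln(αγ))·α^t`;
(iii) `∫_{ℝ≥0} (α^(max(s,t)+s+t) − (1/3)α^(3 max(s,t))) ds
        = ((11/(18 ln α))·α^t − 1/ln α − t·α^t/3)·α^(2t)`. -/
theorem phi0_TC_DC_SS_continuous
    (α : ℝ) (hα : α ∈ Set.Ioo (0 : ℝ) 1) (t : ℝ) (ht : 0 ≤ t) :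
    (∫ s in Set.Ici (0 : ℝ), α ^ max s t = (t - 1 / Real.log α) * α ^ t) ∧
    (∀ γ : ℝ, γ ∈ Set.Ioo (0 : ℝ) (α ^ (-1/2 : ℝ)) → γ ≠ 1 →
      ∫ s in Set.Ici (0 : ℝ), α ^ max s t * γ ^ |s - t| =
        -((1 - γ ^ t) / Real.log γ + 1 / Real.log (α * γ)) * α ^ t) ∧
    (∫ s in Set.Ici (0 : ℝ), (α ^ (max s t + s + t) - (1/3) * α ^ (3 * max s t)) =
      ((11 / (18 * Real.log α)) * α ^ t - 1 / Real.log α - t * α ^ t / 3) *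
        α ^ (2 * t)) := by
  obtain ⟨hα0, hα1⟩ := hα
  exact ⟨integral_Ici_rpow_max hα0 hα1 ht,
    fun γ ⟨hγ0, hγ⟩ hγ1 => integral_Ici_rpow_max_mul_rpow_abs_sub hα0 hγ0 hγ1
      (mul_lt_one_of_lt_rpow_neg_half hα0 hα1 hγ) ht,
    integral_Ici_rpow_max_add_add_sub_rpow_three_mul_max hα0 hα1 ht⟩
end

section
/- Let α ∈ (0,1) and let x, y ≥ 0 be real. Then: (i) ∫_0^x ∫_0^y α^(max(s,t)) dt ds = min(x,y)·(α^x + α^y)/ln α + 2·(1 − α^(min(x,y)))/(ln α)²; (ii) ∫_0^x ∫_{ℝ≥0} α^(max(s,t)) dt ds = (x·α^x·ln α + 2·(1 − α^x))/(ln α)². -/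
/-!
For fixed `s ≥ 0` the kernel `t ↦ α ^ max s t` is the constant `α ^ s` on `[0, s]` and `α ^ t`
beyond `s`, so each inner integral is `s α^s` plus an elementary integral of `α ^ t`. What is left
is to integrate `s α^s` and `α^s` over `[0, x]`, which is done with explicit antiderivatives.
In (i) the kernel is symmetric, so Fubini reduces the case `y ≤ x` to `x ≤ y`.
-/

open MeasureTheory Set Real

section CompMax

variable {E : Type*} [NormedAddCommGroup E] [NormedSpace ℝ E] {f : ℝ → E} {a b s : ℝ}

theorem intervalIntegral_intervalIntegral_comp_max_comm (hf : Continuous f) (x y : ℝ) :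
    ∫ s in a..x, ∫ t in a..y, f (max s t) = ∫ s in a..y, ∫ t in a..x, f (max s t) := by
  have hF : Continuous (Function.uncurry fun s t => f (max s t)) :=
    hf.comp (continuous_fst.max continuous_snd)
  rw [intervalIntegral_intervalIntegral_swap
    ((hF.continuousOn.integrableOn_compact (isCompact_uIcc.prod isCompact_uIcc)).mono_set
      (prod_mono uIoc_subset_uIcc uIoc_subset_uIcc))]
  simp_rw [max_comm]

variable [CompleteSpace E]

theorem intervalIntegral_comp_max_of_le (hab : a ≤ b) (hbs : b ≤ s) :
    ∫ t in a..b, f (max s t) = (b - a) • f s := by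
  rw [intervalIntegral.integral_congr (g := fun _ => f s) fun t ht => by
      rw [uIcc_of_le hab] at ht
      simp [max_eq_left (ht.2.trans hbs)],
    intervalIntegral.integral_const]

theorem intervalIntegral_comp_max_of_mem (hf : Continuous f) (has : a ≤ s) (hsb : s ≤ b) :
    ∫ t in a..b, f (max s t) = (s - a) • f s + ∫ t in s..b, f t := by
  have hfs : Continuous fun t => f (max s t) := hf.comp (continuous_const.max continuous_id)
  rw [← intervalIntegral.integral_add_adjacent_intervals (hfs.intervalIntegrable a s)
      (hfs.intervalIntegrable s b), intervalIntegral_comp_max_of_le has le_rfl]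
  congr 1
  refine intervalIntegral.integral_congr fun t ht => ?_
  rw [uIcc_of_le hsb] at ht
  simp [max_eq_right ht.1]

theorem setIntegral_Ici_comp_max (hf : Continuous f) (hfi : IntegrableOn f (Ioi s))
    (has : a ≤ s) :
    ∫ t in Ici a, f (max s t) = (s - a) • f s + ∫ t in Ioi s, f t := by
  have hfs : Continuous fun t => f (max s t) := hf.comp (continuous_const.max continuous_id)
  have hfi' : IntegrableOn (fun t => f (max s t)) (Ici s) := by
    rw [integrableOn_Ici_iff_integrableOn_Ioi]
    exact hfi.congr_fun (fun t ht => by simp [max_eq_right (mem_Ioi.mp ht).le]) measurableSet_Ioi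
  rw [← Ico_union_Ici_eq_Ici has,
    setIntegral_union ((Iio_disjoint_Ici le_rfl).mono_left Ico_subset_Iio_self) measurableSet_Ici
      (hfs.integrableOn_Icc.mono_set Ico_subset_Icc_self) hfi',
    setIntegral_congr_fun measurableSet_Ico (g := fun _ => f s)
      fun t ht => by simp [max_eq_left ht.2.le],
    setIntegral_congr_fun measurableSet_Ici (g := f)
      fun t ht => by simp [max_eq_right (mem_Ici.mp ht)],
    integral_Ici_eq_integral_Ioi, setIntegral_const, volume_real_Ico_of_le has]

end CompMax

section ConstRpow

variable {α : ℝ}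

theorem integral_const_rpow_s15 (hα : 0 < α) (hα1 : α ≠ 1) (a b : ℝ) :
    ∫ t in a..b, α ^ t = (α ^ b - α ^ a) / log α := by
  have hL : log α ≠ 0 := log_ne_zero_of_pos_of_ne_one hα hα1
  rw [intervalIntegral.integral_eq_sub_of_hasDerivAt (f := fun t => α ^ t / log α)
      (fun t _ => by
        simpa [hL] using (hasStrictDerivAt_const_rpow hα t).hasDerivAt.div_const (log α))
      ((continuous_const_rpow hα.ne').intervalIntegrable a b)]
  ring

theorem integral_mul_const_rpow (hα : 0 < α) (hα1 : α ≠ 1) (a b : ℝ) :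
    ∫ t in a..b, t * α ^ t =
      (b * α ^ b - a * α ^ a) / log α - (α ^ b - α ^ a) / log α ^ 2 := by
  have hL : log α ≠ 0 := log_ne_zero_of_pos_of_ne_one hα hα1
  have hderiv (t : ℝ) :
      HasDerivAt (fun u => u * α ^ u / log α - α ^ u / log α ^ 2) (t * α ^ t) t := by
    have hpow := (hasStrictDerivAt_const_rpow hα t).hasDerivAt
    refine ((((hasDerivAt_id' t).mul hpow).div_const (log α)).sub
      (hpow.div_const (log α ^ 2))).congr_deriv ?_
    field_simp
    ring
  rw [intervalIntegral.integral_eq_sub_of_hasDerivAt (fun t _ => hderiv t)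
      ((continuous_id.mul (continuous_const_rpow hα.ne')).intervalIntegrable a b)]
  ring

theorem integrableOn_Ioi_const_rpow (hα : 0 < α) (hα1 : α < 1) (c : ℝ) :
    IntegrableOn (fun t => α ^ t) (Ioi c) := by
  simpa only [rpow_def_of_pos hα] using integrableOn_exp_mul_Ioi (log_neg hα hα1) c

theorem integral_Ioi_const_rpow (hα : 0 < α) (hα1 : α < 1) (c : ℝ) :
    ∫ t in Ioi c, α ^ t = -α ^ c / log α := by
  simpa only [rpow_def_of_pos hα] using integral_exp_mul_Ioi (log_neg hα hα1) c

end ConstRpow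

section RpowMax

variable {α : ℝ}

theorem intervalIntegral_intervalIntegral_rpow_max_of_le (hα : 0 < α) (hα1 : α ≠ 1) {x y : ℝ}
    (hx : 0 ≤ x) (hxy : x ≤ y) :
    ∫ s in (0:ℝ)..x, ∫ t in (0:ℝ)..y, α ^ max s t =
      x * (α ^ x + α ^ y) / log α + 2 * (1 - α ^ x) / log α ^ 2 := by
  have hL := log_ne_zero_of_pos_of_ne_one hα hα1
  have hcont : Continuous fun t : ℝ => α ^ t := continuous_const_rpow hα.ne'
  have hinner : EqOn (fun s => ∫ t in (0:ℝ)..y, α ^ max s t)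
      (fun s => s * α ^ s + (α ^ y - α ^ s) / log α) (uIcc 0 x) := by
    intro s hs
    rw [uIcc_of_le hx] at hs
    simp only [intervalIntegral_comp_max_of_mem hcont hs.1 (hs.2.trans hxy),
      integral_const_rpow_s15 hα hα1, sub_zero, smul_eq_mul]
  rw [intervalIntegral.integral_congr hinner,
    intervalIntegral.integral_add (f := fun s => s * α ^ s) (g := fun s => (α ^ y - α ^ s) / log α)
      ((continuous_id'.mul hcont).intervalIntegrable _ _)
      (((continuous_const.sub hcont).div_const _).intervalIntegrable _ _),
    intervalIntegral.integral_div, intervalIntegral.integral_sub intervalIntegrable_const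
      (hcont.intervalIntegrable _ _),
    intervalIntegral.integral_const, integral_mul_const_rpow hα hα1, integral_const_rpow_s15 hα hα1]
  simp only [rpow_zero, smul_eq_mul, sub_zero, zero_mul]
  field_simp
  ring

theorem intervalIntegral_setIntegral_Ici_rpow_max (hα : 0 < α) (hα1 : α < 1) {x : ℝ}
    (hx : 0 ≤ x) :
    ∫ s in (0:ℝ)..x, ∫ t in Ici (0:ℝ), α ^ max s t =
      (x * α ^ x * log α + 2 * (1 - α ^ x)) / log α ^ 2 := by
  have hL := (log_neg hα hα1).ne
  have hcont : Continuous fun t : ℝ => α ^ t := continuous_const_rpow hα.ne'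
  have hinner : EqOn (fun s => ∫ t in Ici (0:ℝ), α ^ max s t)
      (fun s => s * α ^ s - α ^ s / log α) (uIcc 0 x) := by
    intro s hs
    rw [uIcc_of_le hx] at hs
    dsimp only
    rw [setIntegral_Ici_comp_max hcont (integrableOn_Ioi_const_rpow hα hα1 s) hs.1,
      integral_Ioi_const_rpow hα hα1, smul_eq_mul]
    ring
  rw [intervalIntegral.integral_congr hinner,
    intervalIntegral.integral_sub (f := fun s => s * α ^ s)
      ((continuous_id'.mul hcont).intervalIntegrable _ _)
      ((hcont.div_const _).intervalIntegrable _ _),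
    intervalIntegral.integral_div, integral_mul_const_rpow hα hα1.ne, integral_const_rpow_s15 hα hα1.ne]
  simp only [rpow_zero, zero_mul, sub_zero]
  field_simp
  ring

end RpowMax

/-- Double integrals of the TC kernel:
(i) `∫_0^x ∫_0^y α^(max(s,t)) dt ds
      = min(x,y)·(α^x + α^y)/ln α + 2(1 − α^(min(x,y)))/(ln α)²`;
(ii) `∫_0^x ∫_{ℝ≥0} α^(max(s,t)) dt ds = (x·α^x·ln α + 2(1 − α^x))/(ln α)²`. -/
theorem nu_TC
    (α : ℝ) (hα : α ∈ Set.Ioo (0 : ℝ) 1)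
    (x y : ℝ) (hx : 0 ≤ x) (hy : 0 ≤ y) :
    (∫ s in (0:ℝ)..x, ∫ t in (0:ℝ)..y, α ^ max s t =
      min x y * (α ^ x + α ^ y) / Real.log α +
        2 * (1 - α ^ min x y) / (Real.log α) ^ 2) ∧
    (∫ s in (0:ℝ)..x, ∫ t in Set.Ici (0 : ℝ), α ^ max s t =
      (x * α ^ x * Real.log α + 2 * (1 - α ^ x)) / (Real.log α) ^ 2) := by
  obtain ⟨hα0, hα1⟩ := hα
  refine ⟨?_, intervalIntegral_setIntegral_Ici_rpow_max hα0 hα1 hx⟩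
  rcases le_total x y with hxy | hyx
  · rw [min_eq_left hxy, intervalIntegral_intervalIntegral_rpow_max_of_le hα0 hα1.ne hx hxy]
  · rw [min_eq_right hyx, intervalIntegral_intervalIntegral_comp_max_comm
      (continuous_const_rpow hα0.ne'),
    intervalIntegral_intervalIntegral_rpow_max_of_le hα0 hα1.ne hy hyx, add_comm (α ^ x)]
end

section
/- Let α ∈ (0,1), γ ∈ (0, α^(−1/2)) with γ ≠ 1, and let x, y ≥ 0 be real. Then: (i) ∫_0^x ∫_0^y α^(max(s,t))·γ^(|s−t|) dt ds = ((1 − γ^(−min(x,y)))·((αγ)^x + (αγ)^y))/(ln γ · ln(αγ)) + (2 − 2·α^(min(x,y)))/(ln α · ln(αγ)); (ii) ∫_0^x ∫_{ℝ≥0} α^(max(s,t))·γ^(|s−t|) dt ds = (α^x·γ^x − α^x)/(ln γ · ln(αγ)) + (2 − 2·α^x)/(ln α · ln(αγ)). -/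
open MeasureTheory Real Set

lemma contConstRpow {c : ℝ} (hc : 0 < c) : Continuous fun t : ℝ => c ^ t :=
  continuous_iff_continuousAt.2 fun _ => Real.continuousAt_const_rpow hc.ne'

lemma integrableOnConstRpow {c : ℝ} (hc : 0 < c) (hc1 : c < 1) (a : ℝ) :
    IntegrableOn (fun t : ℝ => c ^ t) (Set.Ioi a) := by
  have hb : 0 < -Real.log c := by
    have := Real.log_neg hc hc1; linarith
  have := exp_neg_integrableOn_Ioi a hb
  refine this.congr_fun (fun t _ => ?_) measurableSet_Ioi
  rw [Real.rpow_def_of_pos hc]; ring_nf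

lemma integralConstRpow_Ioi {c : ℝ} (hc : 0 < c) (hc1 : c < 1) (a : ℝ) :
    ∫ t in Set.Ioi a, c ^ t = -(c ^ a) / Real.log c := by
  have hlog : Real.log c < 0 := Real.log_neg hc hc1
  have hd : ∀ t ∈ Set.Ioi a, HasDerivAt (fun u : ℝ => c ^ u / Real.log c) (c ^ t) t := by
    intro t _
    have := ((Real.hasStrictDerivAt_const_rpow hc t).hasDerivAt).div_const (Real.log c)
    simpa [mul_div_assoc, mul_div_cancel_right₀ _ hlog.ne] using this
  have htend : Filter.Tendsto (fun u : ℝ => c ^ u / Real.log c) Filter.atTop (nhds 0) := by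
    have h0 : Filter.Tendsto (fun u : ℝ => c ^ u) Filter.atTop (nhds 0) := by
      have : ∀ u : ℝ, c ^ u = Real.exp (Real.log c * u) := fun u => Real.rpow_def_of_pos hc u
      simp only [this]
      refine Real.tendsto_exp_atBot.comp ?_
      exact Filter.Tendsto.const_mul_atTop_of_neg hlog Filter.tendsto_id
    simpa using h0.div_const (Real.log c)
  have := MeasureTheory.integral_Ioi_of_hasDerivAt_of_tendsto
    (((contConstRpow hc).div_const (Real.log c)).continuousWithinAt) hd
    (integrableOnConstRpow hc hc1 a) htend
  rw [this]; ring

lemma intIntConstRpow {c : ℝ} (hc : 0 < c) (a b : ℝ) :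
    IntervalIntegrable (fun t : ℝ => c ^ t) volume a b :=
  (contConstRpow hc).intervalIntegrable a b

lemma logNeZero {c : ℝ} (hc : 0 < c) (hc1 : c ≠ 1) : Real.log c ≠ 0 := by
  intro h
  rcases Real.log_eq_zero.mp h with h|h|h <;> [exact hc.ne' h; exact hc1 h; linarith]

lemma integralConstRpow {c : ℝ} (hc : 0 < c) (hc1 : c ≠ 1) (a b : ℝ) :
    ∫ t in a..b, c ^ t = (c ^ b - c ^ a) / Real.log c := by
  have hlog : Real.log c ≠ 0 := logNeZero hc hc1
  have : ∀ t : ℝ, HasDerivAt (fun u : ℝ => c ^ u / Real.log c) (c ^ t) t := by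
    intro t
    have := ((Real.hasStrictDerivAt_const_rpow hc t).hasDerivAt).div_const (Real.log c)
    simpa [mul_div_assoc, mul_div_cancel_right₀ _ hlog] using this
  rw [intervalIntegral.integral_eq_sub_of_hasDerivAt (fun t _ => this t)
    (intIntConstRpow hc a b)]
  ring

lemma kcont {α γ : ℝ} (hα : 0 < α) (hγ : 0 < γ) (s : ℝ) :
    Continuous fun t : ℝ => α ^ max s t * γ ^ |s - t| :=
  ((contConstRpow hα).comp (continuous_const.max continuous_id)).mul
    ((contConstRpow hγ).comp ((continuous_const.sub continuous_id).abs))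

lemma inner_i {α γ : ℝ} (hα : 0 < α) (hγ : 0 < γ) (hγ1 : γ ≠ 1) (hαγ1 : α * γ ≠ 1)
    {s y : ℝ} (hs : 0 ≤ s) (hsy : s ≤ y) :
    ∫ t in (0:ℝ)..y, α ^ max s t * γ ^ |s - t| =
      ((α*γ) ^ s - α ^ s) / Real.log γ +
        ((α*γ) ^ y * (γ ^ s)⁻¹ - α ^ s) / Real.log (α*γ) := by
  have hint : ∀ a b : ℝ, IntervalIntegrable (fun t => α ^ max s t * γ ^ |s - t|) volume a b :=
    fun a b => (kcont hα hγ s).intervalIntegrable a b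
  have hγi1 : (γ:ℝ)⁻¹ ≠ 1 := fun h => hγ1 (by simpa using congrArg (·⁻¹) h)
  rw [← intervalIntegral.integral_add_adjacent_intervals (hint 0 s) (hint s y)]
  have h1 : ∫ t in (0:ℝ)..s, α ^ max s t * γ ^ |s - t| =
      α ^ s * γ ^ s * (((γ⁻¹) ^ s - 1) / Real.log γ⁻¹) := by
    rw [intervalIntegral.integral_congr (g := fun t => (α ^ s * γ ^ s) * (γ⁻¹) ^ t) ?_]
    · rw [intervalIntegral.integral_const_mul, integralConstRpow (inv_pos.2 hγ) hγi1]
      simp [Real.rpow_zero]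
    · intro t ht
      rw [Set.uIcc_of_le hs] at ht
      obtain ⟨ht0, hts⟩ := ht
      show α ^ max s t * γ ^ |s - t| = α ^ s * γ ^ s * γ⁻¹ ^ t
      rw [max_eq_left hts, abs_of_nonneg (by linarith), Real.rpow_sub hγ,
        Real.inv_rpow hγ.le, div_eq_mul_inv]
      ring
  have h2 : ∫ t in s..y, α ^ max s t * γ ^ |s - t| =
      γ ^ (-s) * (((α*γ) ^ y - (α*γ) ^ s) / Real.log (α*γ)) := by
    rw [intervalIntegral.integral_congr (g := fun t => γ ^ (-s) * (α*γ) ^ t) ?_]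
    · rw [intervalIntegral.integral_const_mul,
        integralConstRpow (mul_pos hα hγ) hαγ1]
    · intro t ht
      rw [Set.uIcc_of_le hsy] at ht
      obtain ⟨hts, hty⟩ := ht
      show α ^ max s t * γ ^ |s - t| = γ ^ (-s) * (α * γ) ^ t
      rw [max_eq_right hts, abs_of_nonpos (by linarith), neg_sub,
        show t - s = t + -s by ring, Real.rpow_add hγ, Real.mul_rpow hα.le hγ.le]
      ring
  rw [h1, h2, Real.log_inv, Real.inv_rpow hγ.le, Real.rpow_neg hγ.le,
    Real.mul_rpow hα.le hγ.le, Real.mul_rpow hα.le hγ.le]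
  have hgs : γ ^ s ≠ 0 := (Real.rpow_pos_of_pos hγ s).ne'
  have hlγ : Real.log γ ≠ 0 := logNeZero hγ hγ1
  have hlαγ : Real.log (α*γ) ≠ 0 := logNeZero (mul_pos hα hγ) hαγ1
  field_simp
  ring

lemma inner_ii {α γ : ℝ} (hα : 0 < α) (hγ : 0 < γ) (hγ1 : γ ≠ 1) (hαγ1 : α * γ < 1)
    {s : ℝ} (hs : 0 ≤ s) :
    ∫ t in Set.Ici (0:ℝ), α ^ max s t * γ ^ |s - t| =
      ((α*γ) ^ s - α ^ s) / Real.log γ - α ^ s / Real.log (α*γ) := by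
  have hαγ : 0 < α * γ := mul_pos hα hγ
  have hlαγ : Real.log (α*γ) ≠ 0 := logNeZero hαγ hαγ1.ne
  have hi1 : IntegrableOn (fun t => α ^ max s t * γ ^ |s - t|) (Set.Ioc 0 s) :=
    (kcont hα hγ s).integrableOn_Ioc
  have heq : Set.EqOn (fun t => γ ^ (-s) * (α*γ) ^ t)
      (fun t => α ^ max s t * γ ^ |s - t|) (Set.Ioi s) := by
    intro t ht
    rw [Set.mem_Ioi] at ht
    show γ ^ (-s) * (α * γ) ^ t = α ^ max s t * γ ^ |s - t|
    rw [max_eq_right ht.le, abs_of_nonpos (by linarith), neg_sub,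
      show t - s = t + -s by ring, Real.rpow_add hγ, Real.mul_rpow hα.le hγ.le]
    ring
  have hi2 : IntegrableOn (fun t => α ^ max s t * γ ^ |s - t|) (Set.Ioi s) :=
    IntegrableOn.congr_fun ((integrableOnConstRpow hαγ hαγ1 s).const_mul _) heq measurableSet_Ioi
  rw [MeasureTheory.integral_Ici_eq_integral_Ioi, ← Set.Ioc_union_Ioi_eq_Ioi hs,
    MeasureTheory.setIntegral_union (Set.Ioc_disjoint_Ioi le_rfl) measurableSet_Ioi hi1 hi2]
  have h1 : ∫ t in Set.Ioc (0:ℝ) s, α ^ max s t * γ ^ |s - t| =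
      ((α*γ) ^ s - α ^ s) / Real.log γ := by
    rw [← intervalIntegral.integral_of_le hs, inner_i hα hγ hγ1 hαγ1.ne hs le_rfl,
      Real.mul_rpow hα.le hγ.le]
    have hgs : γ ^ s ≠ 0 := (Real.rpow_pos_of_pos hγ s).ne'
    rw [mul_assoc, mul_inv_cancel₀ hgs]
    simp
  have h2 : ∫ t in Set.Ioi s, α ^ max s t * γ ^ |s - t| = - α ^ s / Real.log (α*γ) := by
    rw [← MeasureTheory.setIntegral_congr_fun measurableSet_Ioi heq,
      MeasureTheory.integral_const_mul, integralConstRpow_Ioi hαγ hαγ1,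
      Real.mul_rpow hα.le hγ.le, Real.rpow_neg hγ.le]
    have hgs : γ ^ s ≠ 0 := (Real.rpow_pos_of_pos hγ s).ne'
    field_simp
  rw [h1, h2]
  ring

section
variable {α γ : ℝ}

lemma part_i_le (hα : 0 < α) (hα1 : α < 1) (hγ : 0 < γ) (hγ1 : γ ≠ 1)
    (hαγ1 : α * γ < 1) {x y : ℝ} (hx : 0 ≤ x) (hxy : x ≤ y) :
    ∫ s in (0:ℝ)..x, ∫ t in (0:ℝ)..y, α ^ max s t * γ ^ |s - t| =
      ((1 - γ ^ (-(min x y))) * ((α * γ) ^ x + (α * γ) ^ y)) /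
          (Real.log γ * Real.log (α * γ)) +
        (2 - 2 * α ^ min x y) / (Real.log α * Real.log (α * γ)) := by
  have hαγ : 0 < α * γ := mul_pos hα hγ
  have hγi : (0:ℝ) < γ⁻¹ := inv_pos.2 hγ
  have hγi1 : (γ:ℝ)⁻¹ ≠ 1 := fun h => hγ1 (by simpa using congrArg (·⁻¹) h)
  rw [intervalIntegral.integral_congr
    (g := fun s => ((α*γ) ^ s - α ^ s) / Real.log γ +
      ((α*γ) ^ y * (γ⁻¹) ^ s - α ^ s) / Real.log (α*γ)) ?_]
  swap
  · intro s hs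
    rw [Set.uIcc_of_le hx] at hs
    show (∫ t in (0:ℝ)..y, α ^ max s t * γ ^ |s - t|) = _
    rw [inner_i hα hγ hγ1 hαγ1.ne hs.1 (hs.2.trans hxy), ← Real.inv_rpow hγ.le]
  rw [intervalIntegral.integral_add
      (((intIntConstRpow hαγ 0 x).sub (intIntConstRpow hα 0 x)).div_const _)
      ((((intIntConstRpow hγi 0 x).const_mul _).sub (intIntConstRpow hα 0 x)).div_const _),
    intervalIntegral.integral_div, intervalIntegral.integral_div,
    intervalIntegral.integral_sub (intIntConstRpow hαγ 0 x) (intIntConstRpow hα 0 x),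
    intervalIntegral.integral_sub ((intIntConstRpow hγi 0 x).const_mul _)
      (intIntConstRpow hα 0 x),
    intervalIntegral.integral_const_mul,
    integralConstRpow hαγ hαγ1.ne, integralConstRpow hα hα1.ne,
    integralConstRpow hγi hγi1]
  have hlγ : Real.log γ ≠ 0 := logNeZero hγ hγ1
  have hlα : Real.log α ≠ 0 := logNeZero hα hα1.ne
  have hlαγ : Real.log α + Real.log γ ≠ 0 := by
    have := logNeZero hαγ hαγ1.ne
    rwa [Real.log_mul hα.ne' hγ.ne'] at this
  have hgx : γ ^ x ≠ 0 := (Real.rpow_pos_of_pos hγ x).ne'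
  rw [min_eq_left hxy, Real.log_inv]
  simp only [Real.rpow_zero, Real.inv_rpow hγ.le, Real.rpow_neg hγ.le,
    Real.log_mul hα.ne' hγ.ne', Real.mul_rpow hα.le hγ.le]
  field_simp
  ring

lemma part_ii' (hα : 0 < α) (hα1 : α < 1) (hγ : 0 < γ) (hγ1 : γ ≠ 1)
    (hαγ1 : α * γ < 1) {x : ℝ} (hx : 0 ≤ x) :
    ∫ s in (0:ℝ)..x, ∫ t in Set.Ici (0 : ℝ), α ^ max s t * γ ^ |s - t| =
      (α ^ x * γ ^ x - α ^ x) / (Real.log γ * Real.log (α * γ)) +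
        (2 - 2 * α ^ x) / (Real.log α * Real.log (α * γ)) := by
  have hαγ : 0 < α * γ := mul_pos hα hγ
  rw [intervalIntegral.integral_congr
    (g := fun s => ((α*γ) ^ s - α ^ s) / Real.log γ - α ^ s / Real.log (α*γ)) ?_]
  swap
  · intro s hs
    rw [Set.uIcc_of_le hx] at hs
    show (∫ t in Set.Ici (0:ℝ), α ^ max s t * γ ^ |s - t|) = _
    rw [inner_ii hα hγ hγ1 hαγ1 hs.1]
  rw [intervalIntegral.integral_sub
      (((intIntConstRpow hαγ 0 x).sub (intIntConstRpow hα 0 x)).div_const _)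
      ((intIntConstRpow hα 0 x).div_const _),
    intervalIntegral.integral_div, intervalIntegral.integral_div,
    intervalIntegral.integral_sub (intIntConstRpow hαγ 0 x) (intIntConstRpow hα 0 x),
    integralConstRpow hαγ hαγ1.ne, integralConstRpow hα hα1.ne]
  have hlγ : Real.log γ ≠ 0 := logNeZero hγ hγ1
  have hlα : Real.log α ≠ 0 := logNeZero hα hα1.ne
  have hlαγ : Real.log α + Real.log γ ≠ 0 := by
    have := logNeZero hαγ hαγ1.ne
    rwa [Real.log_mul hα.ne' hγ.ne'] at this
  simp only [Real.rpow_zero, Real.log_mul hα.ne' hγ.ne', Real.mul_rpow hα.le hγ.le]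
  field_simp
  ring

lemma swap_k (hα : 0 < α) (hγ : 0 < γ) {x y : ℝ} (hx : 0 ≤ x) (hy : 0 ≤ y) :
    ∫ s in (0:ℝ)..x, ∫ t in (0:ℝ)..y, α ^ max s t * γ ^ |s - t| =
      ∫ t in (0:ℝ)..y, ∫ s in (0:ℝ)..x, α ^ max s t * γ ^ |s - t| := by
  simp only [intervalIntegral.integral_of_le hx, intervalIntegral.integral_of_le hy]
  apply MeasureTheory.integral_integral_swap
  rw [Measure.prod_restrict]
  have hc : Continuous (Function.uncurry fun s t : ℝ => α ^ max s t * γ ^ |s - t|) := by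
    exact ((contConstRpow hα).comp (continuous_fst.max continuous_snd)).mul
      ((contConstRpow hγ).comp ((continuous_fst.sub continuous_snd).abs))
  have h1 : IntegrableOn (Function.uncurry fun s t : ℝ => α ^ max s t * γ ^ |s - t|)
      (Set.Icc 0 x ×ˢ Set.Icc 0 y) (volume.prod volume) :=
    hc.continuousOn.integrableOn_compact (isCompact_Icc.prod isCompact_Icc)
  exact h1.mono_set (Set.prod_mono Set.Ioc_subset_Icc_self Set.Ioc_subset_Icc_self)

end

/-- Double integrals of the DC kernel:
(i) `∫_0^x ∫_0^y α^(max(s,t))·γ^|s−t| dt ds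
      = ((1 − γ^(−min(x,y)))·((αγ)^x + (αγ)^y))/(ln γ · ln(αγ))
        + (2 − 2α^(min(x,y)))/(ln α · ln(αγ))`;
(ii) `∫_0^x ∫_{ℝ≥0} α^(max(s,t))·γ^|s−t| dt ds
      = (α^x·γ^x − α^x)/(ln γ · ln(αγ)) + (2 − 2α^x)/(ln α · ln(αγ))`. -/
theorem nu_DC
    (α : ℝ) (hα : α ∈ Set.Ioo (0 : ℝ) 1)
    (γ : ℝ) (hγ : γ ∈ Set.Ioo (0 : ℝ) (α ^ (-1/2 : ℝ))) (hγ1 : γ ≠ 1)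
    (x y : ℝ) (hx : 0 ≤ x) (hy : 0 ≤ y) :
    (∫ s in (0:ℝ)..x, ∫ t in (0:ℝ)..y, α ^ max s t * γ ^ |s - t| =
      ((1 - γ ^ (-(min x y))) * ((α * γ) ^ x + (α * γ) ^ y)) /
          (Real.log γ * Real.log (α * γ)) +
        (2 - 2 * α ^ min x y) / (Real.log α * Real.log (α * γ))) ∧
    (∫ s in (0:ℝ)..x, ∫ t in Set.Ici (0 : ℝ), α ^ max s t * γ ^ |s - t| =
      (α ^ x * γ ^ x - α ^ x) / (Real.log γ * Real.log (α * γ)) +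
        (2 - 2 * α ^ x) / (Real.log α * Real.log (α * γ))) := by
  obtain ⟨hα0, hα1⟩ := hα
  obtain ⟨hγ0, hγub⟩ := hγ
  have hαγ1 : α * γ < 1 := by
    have h1 : α * γ < α * α ^ (-1/2 : ℝ) := by
      exact mul_lt_mul_of_pos_left hγub hα0
    have h2 : α ^ (1:ℝ) * α ^ (-1/2 : ℝ) = α ^ (1/2 : ℝ) := by
      rw [← Real.rpow_add hα0]; norm_num
    have h3 : α ^ (1/2 : ℝ) < 1 := Real.rpow_lt_one hα0.le hα1 (by norm_num)
    rw [Real.rpow_one] at h2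
    linarith [h1, h2 ▸ h1]
  constructor
  · rcases le_total x y with h | h
    · exact part_i_le hα0 hα1 hγ0 hγ1 hαγ1 hx h
    · rw [swap_k hα0 hγ0 hx hy, min_comm x y,
        add_comm ((α * γ) ^ x) ((α * γ) ^ y)]
      have h2 := part_i_le hα0 hα1 hγ0 hγ1 hαγ1 hy h
      rw [← h2]
      refine intervalIntegral.integral_congr fun t _ => ?_
      show (∫ s in (0:ℝ)..x, α ^ max s t * γ ^ |s - t|) =
        ∫ s in (0:ℝ)..x, α ^ max t s * γ ^ |t - s|
      refine intervalIntegral.integral_congr fun s _ => ?_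
      show α ^ max s t * γ ^ |s - t| = α ^ max t s * γ ^ |t - s|
      rw [max_comm, abs_sub_comm]
  · exact part_ii' hα0 hα1 hγ0 hγ1 hαγ1 hx
end

section
/- Let α ∈ (0,1). Then: (i) ∫_{ℝ≥0×ℝ≥0} α^(max(s,t)) ds dt = 2/(ln α)²; (ii) for every γ ∈ (0, α^(−1/2)) with γ ≠ 1, ∫_{ℝ≥0×ℝ≥0} α^(max(s,t))·γ^(|s−t|) ds dt = 2/(ln α · ln(αγ)); (iii) ∫_{ℝ≥0×ℝ≥0} (α^(max(s,t)+s+t) − (1/3)·α^(3·max(s,t))) ds dt = 7/(27(ln α)²). -/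
/-!
Each of the three kernels is of the form `exp (c * max s t + d * min s t)` (or a combination of
two such) with `c < 0` and `c + d < 0`. Such an integrand is symmetric, so its integral over the
quadrant is twice the integral over the wedge `0 ≤ s ≤ t` (the diagonal is null). The shear
`(u, v) ↦ (u, u + v)` maps the quadrant onto the wedge preserving Lebesgue measure, and turns
the integrand into the product `exp ((c + d) * u) * exp (c * v)`, whose integral is
`1 / (c * (c + d))`.
-/

open MeasureTheory Set Real

theorem MeasureTheory.Measure.prod_diagonal_eq_zero {α : Type*} [MeasurableSpace α]
    [MeasurableEq α] (μ : Measure α) [SFinite μ] [NullSingletonClass μ] :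
    μ.prod μ (diagonal α) = 0 := by
  rw [Measure.prod_apply measurableSet_diagonal]
  simp [Set.preimage, Set.diagonal]

def wedge : Set (ℝ × ℝ) := {p | 0 ≤ p.1 ∧ p.1 ≤ p.2}

lemma measurableSet_wedge : MeasurableSet wedge :=
  (measurableSet_le measurable_const measurable_fst).inter
    (measurableSet_le measurable_fst measurable_snd)

lemma preimage_shear_wedge :
    (fun q : ℝ × ℝ => (q.1, q.1 + q.2)) ⁻¹' wedge = Ici 0 ×ˢ Ici 0 := by
  ext q
  simp [wedge, Prod.le_def]

lemma Ici_prod_Ici_eq_wedge_union : Ici (0 : ℝ) ×ˢ Ici 0 = wedge ∪ Prod.swap ⁻¹' wedge := by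
  ext ⟨x, y⟩
  simp only [wedge, mem_prod, mem_Ici, mem_union, mem_ofPred_eq, mem_preimage, Prod.swap_prod_mk]
  constructor
  · rintro ⟨hx, hy⟩
    exact (le_total x y).imp (⟨hx, ·⟩) (⟨hy, ·⟩)
  · rintro (⟨hx, hxy⟩ | ⟨hy, hyx⟩)
    exacts [⟨hx, hx.trans hxy⟩, ⟨hy.trans hyx, hy⟩]

lemma wedge_inter_swap_subset_diagonal : wedge ∩ Prod.swap ⁻¹' wedge ⊆ diagonal ℝ :=
  fun _ ⟨h, h'⟩ => le_antisymm h.2 h'.2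

section Wedge

variable {E : Type*} [NormedAddCommGroup E] {f : ℝ × ℝ → E}

lemma measurePreserving_shear : MeasurePreserving (fun q : ℝ × ℝ => (q.1, q.1 + q.2)) :=
  measurePreserving_prod_add volume volume

lemma measurableEmbedding_shear : MeasurableEmbedding (fun q : ℝ × ℝ => (q.1, q.1 + q.2)) :=
  (MeasurableEquiv.shearAddRight ℝ).measurableEmbedding

lemma integrableOn_wedge_iff :
    IntegrableOn f wedge ↔ IntegrableOn (fun q => f (q.1, q.1 + q.2)) (Ici 0 ×ˢ Ici 0) := by
  rw [← preimage_shear_wedge]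
  exact (measurePreserving_shear.integrableOn_comp_preimage measurableEmbedding_shear).symm

lemma integrableOn_swap_preimage_wedge (hsymm : ∀ p, f p.swap = f p)
    (hf : IntegrableOn f wedge) :
    IntegrableOn f (Prod.swap ⁻¹' wedge) := by
  have hswap : f ∘ Prod.swap = f := funext hsymm
  have := (Measure.measurePreserving_swap (μ := volume) (ν := volume)).integrableOn_comp_preimage
    MeasurableEquiv.prodComm.measurableEmbedding |>.mpr hf
  rwa [hswap] at this

lemma IntegrableOn.Ici_prod_Ici_of_swap_eq (hsymm : ∀ p, f p.swap = f p)
    (hf : IntegrableOn f wedge) :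
    IntegrableOn f (Ici 0 ×ˢ Ici 0) := by
  rw [Ici_prod_Ici_eq_wedge_union]
  exact hf.union (integrableOn_swap_preimage_wedge hsymm hf)

variable [NormedSpace ℝ E]

lemma setIntegral_wedge (f : ℝ × ℝ → E) :
    ∫ p in wedge, f p = ∫ q in Ici 0 ×ˢ Ici 0, f (q.1, q.1 + q.2) := by
  rw [← preimage_shear_wedge,
    measurePreserving_shear.setIntegral_preimage_emb measurableEmbedding_shear]

lemma setIntegral_swap_preimage_wedge (hsymm : ∀ p, f p.swap = f p) :
    ∫ p in Prod.swap ⁻¹' wedge, f p = ∫ p in wedge, f p := by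
  conv_lhs => enter [2, p]; rw [← hsymm]
  exact Measure.measurePreserving_swap.setIntegral_preimage_emb
    MeasurableEquiv.prodComm.measurableEmbedding f wedge

lemma setIntegral_Ici_prod_Ici_of_swap_eq (hsymm : ∀ p, f p.swap = f p)
    (hf : IntegrableOn f wedge) :
    ∫ p in Ici 0 ×ˢ Ici 0, f p = (2 : ℝ) • ∫ p in wedge, f p := by
  have hnull : volume (wedge ∩ Prod.swap ⁻¹' wedge) = 0 :=
    measure_mono_null wedge_inter_swap_subset_diagonal (Measure.prod_diagonal_eq_zero volume)
  rw [Ici_prod_Ici_eq_wedge_union, setIntegral_union₀ hnull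
    (measurableSet_wedge.preimage measurable_swap).nullMeasurableSet hf
    (integrableOn_swap_preimage_wedge hsymm hf), setIntegral_swap_preimage_wedge hsymm, two_smul]

end Wedge

section ExpKernel

variable {c d : ℝ}

lemma integrableOn_exp_mul_Ici_zero (hc : c < 0) : IntegrableOn (fun x => exp (c * x)) (Ici 0) :=
  Iff.mpr integrableOn_Ici_iff_integrableOn_Ioi (integrableOn_exp_mul_Ioi hc 0)

lemma integral_exp_mul_Ici_zero (hc : c < 0) : ∫ x in Ici 0, exp (c * x) = -c⁻¹ := by
  simp [integral_Ici_eq_integral_Ioi, integral_exp_mul_Ioi hc, neg_div]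

lemma exp_max_min_shear {u v : ℝ} (hv : 0 ≤ v) :
    exp (c * max u (u + v) + d * min u (u + v)) = exp ((c + d) * u) * exp (c * v) := by
  rw [max_eq_right (by linarith), min_eq_left (by linarith), ← exp_add]
  ring_nf

lemma eqOn_exp_max_min_shear :
    EqOn (fun q : ℝ × ℝ => exp (c * max q.1 (q.1 + q.2) + d * min q.1 (q.1 + q.2)))
      (fun q => exp ((c + d) * q.1) * exp (c * q.2)) (Ici 0 ×ˢ Ici 0) :=
  fun _ hq => exp_max_min_shear hq.2

lemma exp_max_min_swap (p : ℝ × ℝ) :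
    exp (c * max p.swap.1 p.swap.2 + d * min p.swap.1 p.swap.2) =
      exp (c * max p.1 p.2 + d * min p.1 p.2) := by
  simp [max_comm, min_comm]

lemma integrableOn_wedge_exp_max_min (hc : c < 0) (hcd : c + d < 0) :
    IntegrableOn (fun p : ℝ × ℝ => exp (c * max p.1 p.2 + d * min p.1 p.2)) wedge := by
  rw [integrableOn_wedge_iff]
  refine IntegrableOn.congr_fun ?_ eqOn_exp_max_min_shear.symm
    (measurableSet_Ici.prod measurableSet_Ici)
  rw [IntegrableOn, Measure.volume_eq_prod, ← Measure.prod_restrict]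
  exact (integrableOn_exp_mul_Ici_zero hcd).mul_prod (integrableOn_exp_mul_Ici_zero hc)

lemma integrableOn_exp_max_min (hc : c < 0) (hcd : c + d < 0) :
    IntegrableOn (fun p : ℝ × ℝ => exp (c * max p.1 p.2 + d * min p.1 p.2)) (Ici 0 ×ˢ Ici 0) :=
  IntegrableOn.Ici_prod_Ici_of_swap_eq exp_max_min_swap (integrableOn_wedge_exp_max_min hc hcd)

lemma integral_exp_max_min (hc : c < 0) (hcd : c + d < 0) :
    ∫ p in Ici 0 ×ˢ Ici 0, exp (c * max p.1 p.2 + d * min p.1 p.2) = 2 / (c * (c + d)) := by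
  rw [setIntegral_Ici_prod_Ici_of_swap_eq exp_max_min_swap
      (integrableOn_wedge_exp_max_min hc hcd),
    setIntegral_wedge, setIntegral_congr_fun (measurableSet_Ici.prod measurableSet_Ici)
      eqOn_exp_max_min_shear, Measure.volume_eq_prod,
    setIntegral_prod_mul (fun x => exp ((c + d) * x)) (fun y => exp (c * y)), smul_eq_mul,
    integral_exp_mul_Ici_zero hcd, integral_exp_mul_Ici_zero hc]
  field_simp

end ExpKernel

section Kernels

variable {α : ℝ}

lemma setIntegral_rpow_max (hα0 : 0 < α) (hα1 : α < 1) :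
    ∫ p in Ici (0 : ℝ) ×ˢ Ici 0, α ^ max p.1 p.2 = 2 / log α ^ 2 := by
  have hL : log α < 0 := log_neg hα0 hα1
  have hkernel : ∀ p : ℝ × ℝ,
      α ^ max p.1 p.2 = exp (log α * max p.1 p.2 + 0 * min p.1 p.2) := fun p => by
    rw [rpow_def_of_pos hα0, zero_mul, add_zero]
  simp_rw [hkernel]
  rw [integral_exp_max_min hL (by simpa using hL), add_zero, sq]

lemma setIntegral_rpow_max_mul_rpow_abs_sub {γ : ℝ} (hα0 : 0 < α) (hα1 : α < 1) (hγ : 0 < γ)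
    (hαγ : α * γ < 1) :
    ∫ p in Ici (0 : ℝ) ×ˢ Ici 0, α ^ max p.1 p.2 * γ ^ |p.1 - p.2| =
      2 / (log α * log (α * γ)) := by
  have hkernel : ∀ p : ℝ × ℝ, α ^ max p.1 p.2 * γ ^ |p.1 - p.2| =
      exp (log (α * γ) * max p.1 p.2 + -log γ * min p.1 p.2) := fun p => by
    rw [rpow_def_of_pos hα0, rpow_def_of_pos hγ, ← exp_add, log_mul hα0.ne' hγ.ne',
      ← max_sub_min_eq_abs']
    ring_nf
  have hlog : log (α * γ) + -log γ = log α := by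
    rw [log_mul hα0.ne' hγ.ne']
    ring
  simp_rw [hkernel]
  rw [integral_exp_max_min (log_neg (mul_pos hα0 hγ) hαγ) (by rw [hlog]; exact log_neg hα0 hα1),
    hlog, mul_comm]

lemma setIntegral_stable_spline_kernel (hα0 : 0 < α) (hα1 : α < 1) :
    ∫ p in Ici (0 : ℝ) ×ˢ Ici 0,
        (α ^ (max p.1 p.2 + p.1 + p.2) - 1 / 3 * α ^ (3 * max p.1 p.2)) =
      7 / (27 * log α ^ 2) := by
  have hL : log α < 0 := log_neg hα0 hα1
  have hkernel : ∀ p : ℝ × ℝ, α ^ (max p.1 p.2 + p.1 + p.2) - 1 / 3 * α ^ (3 * max p.1 p.2) =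
      exp (2 * log α * max p.1 p.2 + log α * min p.1 p.2) -
        1 / 3 * exp (3 * log α * max p.1 p.2 + 0 * min p.1 p.2) := fun p => by
    have h₁ : log α * (max p.1 p.2 + p.1 + p.2) =
        2 * log α * max p.1 p.2 + log α * min p.1 p.2 := by
      linear_combination -log α * max_add_min p.1 p.2
    have h₂ : log α * (3 * max p.1 p.2) = 3 * log α * max p.1 p.2 + 0 * min p.1 p.2 := by ring
    rw [rpow_def_of_pos hα0, rpow_def_of_pos hα0, h₁, h₂]
  have hc₁ : 2 * log α < 0 := by linarith
  have hcd₁ : 2 * log α + log α < 0 := by linarith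
  have hc₂ : 3 * log α < 0 := by linarith
  have hcd₂ : 3 * log α + 0 < 0 := by linarith
  simp_rw [hkernel]
  rw [integral_sub (integrableOn_exp_max_min hc₁ hcd₁)
      ((integrableOn_exp_max_min hc₂ hcd₂).const_mul _), integral_const_mul,
    integral_exp_max_min hc₁ hcd₁, integral_exp_max_min hc₂ hcd₂]
  have := hL.ne
  field_simp
  ring

end Kernels

/-- `‖φ₀‖²` for the continuous-time standard stable kernels:
(i) `∫_{ℝ≥0×ℝ≥0} α^(max(s,t)) = 2/(ln α)²`;
(ii) `∫_{ℝ≥0×ℝ≥0} α^(max(s,t))·γ^|s−t| = 2/(ln α · ln(αγ))` for `γ ∈ (0, α^(−1/2))`, `γ ≠ 1`;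
(iii) `∫_{ℝ≥0×ℝ≥0} (α^(max(s,t)+s+t) − (1/3)α^(3 max(s,t))) = 7/(27(ln α)²)`. -/
theorem norm_phi0_sq_TC_DC_SS
    (α : ℝ) (hα : α ∈ Set.Ioo (0 : ℝ) 1) :
    (∫ p in Set.Ici (0 : ℝ) ×ˢ Set.Ici (0 : ℝ), α ^ max p.1 p.2 =
      2 / (Real.log α) ^ 2) ∧
    (∀ γ : ℝ, γ ∈ Set.Ioo (0 : ℝ) (α ^ (-1/2 : ℝ)) → γ ≠ 1 →
      ∫ p in Set.Ici (0 : ℝ) ×ˢ Set.Ici (0 : ℝ), α ^ max p.1 p.2 * γ ^ |p.1 - p.2| =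
        2 / (Real.log α * Real.log (α * γ))) ∧
    (∫ p in Set.Ici (0 : ℝ) ×ˢ Set.Ici (0 : ℝ),
        (α ^ (max p.1 p.2 + p.1 + p.2) - (1/3) * α ^ (3 * max p.1 p.2)) =
      7 / (27 * (Real.log α) ^ 2)) := by
  obtain ⟨hα0, hα1⟩ := hα
  refine ⟨setIntegral_rpow_max hα0 hα1, fun γ ⟨hγ0, hγ⟩ _ => ?_,
    setIntegral_stable_spline_kernel hα0 hα1⟩
  refine setIntegral_rpow_max_mul_rpow_abs_sub hα0 hα1 hγ0 ?_
  calc α * γ < α * α ^ (-1 : ℝ) := by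
        gcongr
        exact hγ.trans_le (rpow_le_rpow_of_exponent_ge hα0 hα1.le (by norm_num))
    _ = 1 := by rw [rpow_neg_one, mul_inv_cancel₀ hα0.ne']
end

section
/- Let α ∈ (0,1) and t ∈ ℕ. Then: (i) Σ_{s∈ℕ} α^(max(s,t)) = (t + 1/(1−α))·α^t; (ii) for every γ ∈ (−α^(−1/2), α^(−1/2)) with γ ≠ 1, Σ_{s∈ℕ} α^(max(s,t))·γ^(|s−t|) = ((γ − γ^(t+1))/(1−γ) + 1/(1−αγ))·α^t; (iii) Σ_{s∈ℕ} (α^(max(s,t)+s+t) − (1/3)·α^(3·max(s,t))) = ((1 + α − α^(t+1))/(1−α²) − α^t/(3(1−α³)) − t·α^t/3)·α^(2t). -/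
/-! Split each series at `s = t`. The first `t` terms form a finite sum (constant for TC, a
geometric sum in `γ` for DC, in `α` for SS); writing `s = n + t` for the rest, each summand becomes
a geometric term in `n` with ratio `α`, `α γ`, `α²` or `α³`. -/

open Finset

theorem hasSum_of_hasSum_nat_add {G : Type*} [AddCommGroup G] [TopologicalSpace G]
    [IsTopologicalAddGroup G] {f : ℕ → G} {a b : G} (t : ℕ)
    (htail : HasSum (fun n => f (n + t)) a) (hb : a + ∑ i ∈ range t, f i = b) : HasSum f b :=
  hb ▸ (hasSum_nat_add_iff t).mp htail

theorem abs_mul_lt_one_of_abs_lt_rpow_neg_half {α γ : ℝ} (hα₀ : 0 < α) (hα₁ : α ≤ 1)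
    (hγ : |γ| < α ^ (-1/2 : ℝ)) : |α * γ| < 1 :=
  calc |α * γ| = α * |γ| := by rw [abs_mul, abs_of_pos hα₀]
    _ < α * α ^ (-1/2 : ℝ) := by gcongr
    _ = α ^ (1/2 : ℝ) := by rw [← Real.rpow_one_add' hα₀.le (by norm_num)]; norm_num
    _ ≤ 1 := Real.rpow_le_one hα₀.le hα₁ (by norm_num)

theorem sum_range_tsub_eq_sum_range_succ {M : Type*} [AddCommMonoid M] (f : ℕ → M) (t : ℕ) :
    ∑ s ∈ range t, f (t - s) = ∑ i ∈ range t, f (i + 1) := by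
  rw [← sum_range_reflect]
  exact sum_congr rfl fun i hi => by rw [mem_range] at hi; congr 1; omega

theorem hasSum_pow_max {α : ℝ} (hα : |α| < 1) (t : ℕ) :
    HasSum (fun s : ℕ => α ^ max s t) ((t + 1 / (1 - α)) * α ^ t) := by
  have htail : HasSum (fun n => α ^ max (n + t) t) (α ^ t * (1 - α)⁻¹) :=
    ((hasSum_geometric_of_abs_lt_one hα).mul_left (α ^ t)).congr_fun fun n => by
      rw [max_eq_left (Nat.le_add_left t n), pow_add, mul_comm]
  have hhead : ∑ s ∈ range t, α ^ max s t = t * α ^ t := by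
    rw [sum_congr rfl fun s hs => by rw [max_eq_right (mem_range.mp hs).le]]; simp
  refine hasSum_of_hasSum_nat_add t htail ?_
  rw [hhead]; ring

theorem hasSum_pow_max_mul_pow_dist {α γ : ℝ} (hαγ : |α * γ| < 1) (hγ : γ ≠ 1) (t : ℕ) :
    HasSum (fun s : ℕ => α ^ max s t * γ ^ Nat.dist s t)
      (((γ - γ ^ (t + 1)) / (1 - γ) + 1 / (1 - α * γ)) * α ^ t) := by
  have htail : HasSum (fun n => α ^ max (n + t) t * γ ^ Nat.dist (n + t) t)
      (α ^ t * (1 - α * γ)⁻¹) :=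
    ((hasSum_geometric_of_abs_lt_one hαγ).mul_left (α ^ t)).congr_fun fun n => by
      rw [max_eq_left (Nat.le_add_left t n), Nat.dist_eq_sub_of_le_right (Nat.le_add_left t n),
        Nat.add_sub_cancel, pow_add, mul_pow]
      ring
  have hhead : ∑ s ∈ range t, α ^ max s t * γ ^ Nat.dist s t =
      α ^ t * ∑ i ∈ range t, γ ^ (i + 1) := by
    rw [← sum_range_tsub_eq_sum_range_succ (γ ^ ·), mul_sum]
    refine sum_congr rfl fun s hs => ?_
    have hst := (mem_range.mp hs).le
    rw [max_eq_right hst, Nat.dist_eq_sub_of_le hst]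
  have h1γ : 1 - γ ≠ 0 := sub_ne_zero.mpr hγ.symm
  refine hasSum_of_hasSum_nat_add t htail ?_
  simp_rw [hhead, pow_succ, ← sum_mul, geom_sum_eq hγ]
  field_simp
  ring

theorem hasSum_stableSpline_kernel {α : ℝ} (hα : |α| < 1) (t : ℕ) :
    HasSum (fun s : ℕ => α ^ (max s t + s + t) - (1/3) * α ^ (3 * max s t))
      (((1 + α - α ^ (t + 1)) / (1 - α ^ 2) - α ^ t / (3 * (1 - α ^ 3)) -
          (t : ℝ) * α ^ t / 3) * α ^ (2 * t)) := by
  have hα2 : |α ^ 2| < 1 := by rw [abs_pow]; exact pow_lt_one₀ (abs_nonneg _) hα (by norm_num)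
  have hα3 : |α ^ 3| < 1 := by rw [abs_pow]; exact pow_lt_one₀ (abs_nonneg _) hα (by norm_num)
  have htail : HasSum
      (fun n => α ^ (max (n + t) t + (n + t) + t) - (1/3) * α ^ (3 * max (n + t) t))
      (α ^ (3 * t) * (1 - α ^ 2)⁻¹ - 1/3 * α ^ (3 * t) * (1 - α ^ 3)⁻¹) :=
    (((hasSum_geometric_of_abs_lt_one hα2).mul_left (α ^ (3 * t))).sub
      ((hasSum_geometric_of_abs_lt_one hα3).mul_left (1/3 * α ^ (3 * t)))).congr_fun fun n => by
      rw [max_eq_left (Nat.le_add_left t n), ← pow_mul, ← pow_mul]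
      ring
  have hhead : ∑ s ∈ range t, (α ^ (max s t + s + t) - (1/3) * α ^ (3 * max s t)) =
      α ^ (2 * t) * ∑ i ∈ range t, α ^ i - t * α ^ (3 * t) / 3 := by
    rw [mul_sum, sum_congr rfl fun s hs => by rw [max_eq_right (mem_range.mp hs).le]]
    rw [sum_sub_distrib, sum_const, card_range, nsmul_eq_mul]
    congr 1
    · exact sum_congr rfl fun s _ => by rw [← pow_add]; ring_nf
    · ring
  have h1α : α - 1 ≠ 0 := sub_ne_zero.mpr (abs_lt.mp hα).2.ne
  have h1α2 : 1 - α ^ 2 ≠ 0 := sub_ne_zero.mpr (abs_lt.mp hα2).2.ne'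
  have h1α3 : 1 - α ^ 3 ≠ 0 := sub_ne_zero.mpr (abs_lt.mp hα3).2.ne'
  refine hasSum_of_hasSum_nat_add t htail ?_
  rw [hhead, geom_sum_eq (sub_ne_zero.mp h1α)]
  field_simp
  ring

/-- Steady-state gain representers `φ₀(t)` for the discrete-time TC, DC and
SS kernels:
(i) `∑_{s∈ℕ} α^(max(s,t)) = (t + 1/(1−α))·α^t`;
(ii) `∑_{s∈ℕ} α^(max(s,t))·γ^(dist(s,t)) = ((γ − γ^(t+1))/(1−γ) + 1/(1−αγ))·α^t` for
`γ ∈ (−α^(−1/2), α^(−1/2))`, `γ ≠ 1`;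
(iii) `∑_{s∈ℕ} (α^(max(s,t)+s+t) − (1/3)α^(3 max(s,t)))
        = ((1 + α − α^(t+1))/(1−α²) − α^t/(3(1−α³)) − t·α^t/3)·α^(2t)`. -/
theorem phi0_TC_DC_SS_discrete
    (α : ℝ) (hα : α ∈ Set.Ioo (0 : ℝ) 1) (t : ℕ) :
    (∑' s : ℕ, α ^ max s t = ((t : ℝ) + 1 / (1 - α)) * α ^ t) ∧
    (∀ γ : ℝ, γ ∈ Set.Ioo (-(α ^ (-1/2 : ℝ))) (α ^ (-1/2 : ℝ)) → γ ≠ 1 →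
      ∑' s : ℕ, α ^ max s t * γ ^ Nat.dist s t =
        ((γ - γ ^ (t + 1)) / (1 - γ) + 1 / (1 - α * γ)) * α ^ t) ∧
    (∑' s : ℕ, (α ^ (max s t + s + t) - (1/3) * α ^ (3 * max s t)) =
      ((1 + α - α ^ (t + 1)) / (1 - α ^ 2) - α ^ t / (3 * (1 - α ^ 3)) -
          (t : ℝ) * α ^ t / 3) * α ^ (2 * t)) := by
  obtain ⟨hα₀, hα₁⟩ := hα
  have hα : |α| < 1 := abs_lt.mpr ⟨by linarith, hα₁⟩
  refine ⟨(hasSum_pow_max hα t).tsum_eq, fun γ hγ hγ1 => ?_, (hasSum_stableSpline_kernel hα t).tsum_eq⟩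
  have hαγ := abs_mul_lt_one_of_abs_lt_rpow_neg_half hα₀ hα₁.le (abs_lt.mpr hγ)
  exact (hasSum_pow_max_mul_pow_dist hαγ hγ1 t).tsum_eq
end
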